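/- arXiv:1312.4719 — 9 statements merged into one kernel-verified Lean document; each statement's English description precedes it below -/
import Mathlib

section
/- Let Φ be a nonzero Bernstein function on (0,∞) with Φ(0+) = 0, lim_{s→∞} Φ(s)/s = 0, and Φ'(0+) = 1. Suppose that the limit γ := lim_{s→∞} s·Φ'(s)/Φ(s) exists and γ ∈ (0,1). Then for every b ≠ 0, lim_{α→∞} Φ'(α|b|)/Φ'(α) = |b|^{γ−1}. -/
open Set Filter Topology

/-- A Bernstein function on `(0,∞)`: smooth, nonnegative, and
`(-1)^(k-1) Φ^(k) ≥ 0` on `(0,∞)` for all `k ≥ 1`. -/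
def IsBernstein (Φ : ℝ → ℝ) : Prop :=
  ContDiffOn ℝ (⊤ : ℕ∞) Φ (Set.Ioi 0) ∧
  (∀ s ∈ Set.Ioi (0:ℝ), 0 ≤ Φ s) ∧
  (∀ k : ℕ, 1 ≤ k → ∀ s ∈ Set.Ioi (0:ℝ), 0 ≤ (-1 : ℝ) ^ (k - 1) * iteratedDeriv k Φ s)

/-- If `G` eventually has derivative `g x` at `x` and `g → γ` at infinity, then
`G (t + L) - G t → γ * L`. -/
private lemma slope_lemma (G g : ℝ → ℝ) (γ L : ℝ)
    (hd : ∀ᶠ x in atTop, HasDerivAt G (g x) x)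
    (hg : Tendsto g atTop (𝓝 γ)) :
    Tendsto (fun t => G (t + L) - G t) atTop (𝓝 (γ * L)) := by
  rcases eq_or_ne L 0 with rfl | hL
  · simpa using (tendsto_const_nhds : Tendsto (fun _ : ℝ => (0:ℝ)) atTop (𝓝 0))
  rw [Metric.tendsto_nhds]
  intro ε hε
  have hLpos : 0 < |L| := abs_pos.2 hL
  have hε' : 0 < ε / (2 * |L|) := by positivity
  obtain ⟨T, hT⟩ := eventually_atTop.1 (hd.and (Metric.tendsto_nhds.1 hg _ hε'))
  filter_upwards [eventually_ge_atTop (T + |L|)] with t ht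
  have hmem : ∀ x, t - |L| ≤ x → HasDerivAt G (g x) x ∧ dist (g x) γ < ε / (2 * |L|) :=
    fun x hx => hT x (by linarith)
  have key : ∃ ξ, dist (g ξ) γ < ε / (2 * |L|) ∧ G (t + L) - G t = g ξ * L := by
    rcases lt_or_gt_of_ne hL with hLneg | hLpos'
    · have hab : t + L < t := by linarith
      have habs : |L| = -L := abs_of_neg hLneg
      obtain ⟨ξ, hξ, hs⟩ := exists_hasDerivAt_eq_slope G g hab
        (fun x hx => ((hmem x (by rw [habs] at *; rcases hx with ⟨h1, h2⟩; linarith)).1).continuousAt.continuousWithinAt)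
        (fun x hx => (hmem x (by rw [habs] at *; rcases hx with ⟨h1, h2⟩; linarith)).1)
      refine ⟨ξ, (hmem ξ (by rw [habs] at *; rcases hξ with ⟨h1, h2⟩; linarith)).2, ?_⟩
      have hne : t - (t + L) ≠ 0 := by intro h; apply hL; linarith
      linear_combination (eq_div_iff hne).mp hs
    · have hab : t < t + L := by linarith
      have habs : |L| = L := abs_of_pos hLpos'
      obtain ⟨ξ, hξ, hs⟩ := exists_hasDerivAt_eq_slope G g hab
        (fun x hx => ((hmem x (by rw [habs] at *; rcases hx with ⟨h1, h2⟩; linarith)).1).continuousAt.continuousWithinAt)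
        (fun x hx => (hmem x (by rw [habs] at *; rcases hx with ⟨h1, h2⟩; linarith)).1)
      refine ⟨ξ, (hmem ξ (by rw [habs] at *; rcases hξ with ⟨h1, h2⟩; linarith)).2, ?_⟩
      have hne : t + L - t ≠ 0 := by intro h; apply hL; linarith
      linear_combination -((eq_div_iff hne).mp hs)
  obtain ⟨ξ, hdist, hDe⟩ := key
  rw [Real.dist_eq] at hdist ⊢
  rw [hDe]
  calc |g ξ * L - γ * L| = |g ξ - γ| * |L| := by rw [← sub_mul, abs_mul]
    _ < ε / (2 * |L|) * |L| := mul_lt_mul_of_pos_right hdist hLpos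
    _ = ε / 2 := by field_simp
    _ < ε := by linarith

theorem stmt_4 (Φ : ℝ → ℝ) (hB : IsBernstein Φ)
    (hnz : ∃ s, 0 < s ∧ 0 < Φ s)
    (h0 : Filter.Tendsto Φ (𝓝[>] (0:ℝ)) (𝓝 0))
    (hlin : Filter.Tendsto (fun s => Φ s / s) Filter.atTop (𝓝 0))
    (hd1 : Filter.Tendsto (deriv Φ) (𝓝[>] (0:ℝ)) (𝓝 1))
    (γ : ℝ)
    (hγ : Filter.Tendsto (fun s => s * deriv Φ s / Φ s) Filter.atTop (𝓝 γ))
    (hγ0 : 0 < γ) (hγ1 : γ < 1) :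
    ∀ b : ℝ, b ≠ 0 →
      Filter.Tendsto (fun α => deriv Φ (α * |b|) / deriv Φ α) Filter.atTop
        (𝓝 (|b| ^ (γ - 1))) := by
  intro b hb
  have hc0 : 0 < |b| := abs_pos.2 hb
  set c : ℝ := |b| with hcdef
  -- eventual positivity
  have hγ2 : ∀ᶠ s in atTop, γ / 2 < s * deriv Φ s / Φ s :=
    hγ.eventually (eventually_gt_nhds (by linarith))
  have hpos : ∀ᶠ s in atTop, 0 < Φ s ∧ 0 < deriv Φ s := by
    filter_upwards [hγ2, eventually_gt_atTop 0] with s hf hs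
    have hΦ0 : 0 ≤ Φ s := hB.2.1 s hs
    have hΦ : 0 < Φ s := by
      rcases hΦ0.lt_or_eq with h | h
      · exact h
      · rw [← h] at hf; simp at hf; linarith
    refine ⟨hΦ, ?_⟩
    have hmul : 0 < s * deriv Φ s := by
      have h1 : 0 < s * deriv Φ s / Φ s * Φ s := mul_pos (by linarith) hΦ
      rwa [div_mul_cancel₀ _ hΦ.ne'] at h1
    by_contra h
    push_neg at h
    nlinarith
  have hdiff : ∀ s : ℝ, 0 < s → HasDerivAt Φ (deriv Φ s) s := fun s hs =>
    ((hB.1.differentiableOn (by simp)).differentiableAt (Ioi_mem_nhds hs)).hasDerivAt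
  -- derivative of G t = log (Φ (exp t))
  have hgd : ∀ᶠ t : ℝ in atTop, HasDerivAt (fun t => Real.log (Φ (Real.exp t)))
      (Real.exp t * deriv Φ (Real.exp t) / Φ (Real.exp t)) t := by
    filter_upwards [Real.tendsto_exp_atTop.eventually hpos] with t hp
    have h1 : HasDerivAt (fun t => Φ (Real.exp t)) (deriv Φ (Real.exp t) * Real.exp t) t :=
      (hdiff _ (Real.exp_pos t)).comp t (Real.hasDerivAt_exp t)
    have h2 := h1.log (ne_of_gt hp.1)
    convert h2 using 1
    ring
  have hG : Tendsto (fun t => Real.log (Φ (Real.exp (t + Real.log c)))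
      - Real.log (Φ (Real.exp t))) atTop (𝓝 (γ * Real.log c)) :=
    slope_lemma _ _ γ _ hgd (hγ.comp Real.tendsto_exp_atTop)
  have hG2 := hG.comp Real.tendsto_log_atTop
  have hlogΦ : Tendsto (fun α => Real.log (Φ (α * c)) - Real.log (Φ α)) atTop
      (𝓝 (γ * Real.log c)) := by
    apply hG2.congr'
    filter_upwards [eventually_gt_atTop 0] with α hα
    simp only [Function.comp]
    rw [Real.exp_add, Real.exp_log hα, Real.exp_log hc0]
  have hmulc : Tendsto (fun α : ℝ => α * c) atTop atTop :=
    Tendsto.atTop_mul_const hc0 tendsto_id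
  have hposc : ∀ᶠ α in atTop, 0 < Φ (α * c) ∧ 0 < deriv Φ (α * c) := hmulc.eventually hpos
  have hR : Tendsto (fun α => Φ (α * c) / Φ α) atTop (𝓝 (c ^ γ)) := by
    have h1 : Tendsto (fun α => Real.exp (Real.log (Φ (α * c)) - Real.log (Φ α))) atTop
        (𝓝 (Real.exp (γ * Real.log c))) := (Real.continuous_exp.tendsto _).comp hlogΦ
    rw [Real.rpow_def_of_pos hc0, mul_comm]
    apply h1.congr'
    filter_upwards [hpos, hposc] with α h1 h2
    rw [Real.exp_sub, Real.exp_log h2.1, Real.exp_log h1.1]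
  have hfc : Tendsto (fun α => (α * c) * deriv Φ (α * c) / Φ (α * c)) atTop (𝓝 γ) :=
    hγ.comp hmulc
  have hfrac : Tendsto (fun α => ((α * c) * deriv Φ (α * c) / Φ (α * c))
      / (α * deriv Φ α / Φ α) * (Φ (α * c) / Φ α) * c⁻¹) atTop
      (𝓝 (γ / γ * c ^ γ * c⁻¹)) := ((hfc.div hγ hγ0.ne').mul hR).mul_const _
  have hval : γ / γ * c ^ γ * c⁻¹ = c ^ (γ - 1) := by
    rw [div_self hγ0.ne', one_mul, Real.rpow_sub hc0, Real.rpow_one, div_eq_mul_inv]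
  rw [← hval]
  apply hfrac.congr'
  filter_upwards [hpos, hposc, eventually_gt_atTop 0] with α h1 h2 hα
  obtain ⟨hp1, hq1⟩ := h1
  obtain ⟨hp2, hq2⟩ := h2
  have e1 : Φ α ≠ 0 := hp1.ne'
  have e2 : deriv Φ α ≠ 0 := hq1.ne'
  have e3 : Φ (α * c) ≠ 0 := hp2.ne'
  have e4 : α ≠ 0 := hα.ne'
  have e5 : c ≠ 0 := hc0.ne'
  rw [div_div_eq_mul_div]
  field_simp
end

section
/- For the family Φ_ρ the following hold. (i) If ρ ≤ 0, set γ = ρ/(ρ−1) ∈ [0,1); then lim_{α→∞} Φ'_ρ(α)/α^{γ−1} = (1−γ)^{1−γ}. (ii) For every s > 0, lim_{α→∞} Φ_ρ(αs)/Φ_ρ(α) = 1 if 0 ≤ ρ ≤ 1, and lim_{α→∞} Φ_ρ(αs)/Φ_ρ(α) = s^{ρ/(ρ−1)} if ρ < 0. -/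
open Set Filter Topology

/-- The family `Φ_ρ` of Bernstein penalties induced by the generalized Gamma measure. -/
noncomputable def PhiFam (ρ : ℝ) (s : ℝ) : ℝ :=
  if ρ = 0 then Real.log (1 + s)
  else if ρ = 1 then 1 - Real.exp (-s)
  else (1 / ρ) * (1 - (1 + (1 - ρ) * s) ^ (-(ρ / (1 - ρ))))

/-- The derivative `Φ'_ρ` of the family `Φ_ρ` on `(0,∞)`. -/
noncomputable def PhiFamDeriv (ρ : ℝ) (s : ℝ) : ℝ :=
  if ρ = 0 then 1 / (1 + s)
  else if ρ = 1 then Real.exp (-s)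
  else (1 + (1 - ρ) * s) ^ (-(1 / (1 - ρ)))

/-! Write `c = 1 - ρ` and `γ = ρ/(ρ-1)`. For `ρ ∉ {0, 1}`, `Φ_ρ(α) = (1 - (1 + cα)^γ)/ρ`, and
for every `ρ ≠ 1`, `Φ'_ρ(α) = (1 + cα)^{γ-1}`; everything then follows from `(1 + cα)/α → c`
and `(1 + cαs)/(1 + cα) → s`. For `0 < ρ ≤ 1`, `Φ_ρ → 1/ρ ≠ 0`, so the ratio tends to `1`.
For `ρ < 0`, `Φ_ρ(α) = ((1 + cα)^γ - 1)/(-ρ)` with `(1 + cα)^γ → ∞`, so the constant is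
negligible and the ratio behaves like `((1 + cαs)/(1 + cα))^γ → s^γ`. For `ρ = 0`,
`log(1 + αs) - log(1 + α) → log s` is negligible against `log(1 + α) → ∞`. -/

section Limits

variable {ι : Type*} {l : Filter ι}

lemma tendsto_sub_div_sub_of_tendsto_div {f g : ι → ℝ} {r : ℝ} (hg : Tendsto g l atTop)
    (hfg : Tendsto (fun x => f x / g x) l (𝓝 r)) (a : ℝ) :
    Tendsto (fun x => (f x - a) / (g x - a)) l (𝓝 r) := by
  have ha : Tendsto (fun x => a / g x) l (𝓝 0) := hg.const_div_atTop a
  have h := (hfg.sub ha).div (tendsto_const_nhds (x := (1 : ℝ)).sub ha) (by norm_num)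
  rw [sub_zero, sub_zero, div_one] at h
  refine h.congr' ?_
  filter_upwards [hg.eventually_gt_atTop 0, hg.eventually_gt_atTop a] with x hg0 hga
  have : g x - a ≠ 0 := sub_ne_zero.mpr hga.ne'
  simp only [Pi.div_apply]
  field_simp

lemma tendsto_div_of_tendsto_sub {f g : ι → ℝ} {d : ℝ} (hg : Tendsto g l atTop)
    (hfg : Tendsto (fun x => f x - g x) l (𝓝 d)) :
    Tendsto (fun x => f x / g x) l (𝓝 1) := by
  have h := (hfg.div_atTop hg).add_const 1
  rw [zero_add] at h
  refine h.congr' ?_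
  filter_upwards [hg.eventually_gt_atTop 0] with x hx
  field_simp
  ring

end Limits

lemma tendsto_comp_mul_div_self {f : ℝ → ℝ} {L : ℝ} (hf : Tendsto f atTop (𝓝 L)) (hL : L ≠ 0)
    {s : ℝ} (hs : 0 < s) : Tendsto (fun α => f (α * s) / f α) atTop (𝓝 1) := by
  have h := (hf.comp (tendsto_id.atTop_mul_const hs)).div hf hL
  rwa [div_self hL] at h

lemma tendsto_one_add_mul_atTop {c : ℝ} (hc : 0 < c) :
    Tendsto (fun α : ℝ => 1 + c * α) atTop atTop :=
  tendsto_atTop_add_const_left _ 1 (tendsto_id.const_mul_atTop hc)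

lemma tendsto_one_add_mul_div_self (c : ℝ) :
    Tendsto (fun α : ℝ => (1 + c * α) / α) atTop (𝓝 c) := by
  have h := tendsto_inv_atTop_zero.add_const c
  rw [zero_add] at h
  refine h.congr' ?_
  filter_upwards [eventually_gt_atTop (0 : ℝ)] with α hα
  field_simp

lemma tendsto_one_add_mul_mul_div_one_add_mul {c : ℝ} (hc : c ≠ 0) (s : ℝ) :
    Tendsto (fun α : ℝ => (1 + c * (α * s)) / (1 + c * α)) atTop (𝓝 s) := by
  have h := (tendsto_one_add_mul_div_self (c * s)).div (tendsto_one_add_mul_div_self c) hc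
  rw [mul_div_cancel_left₀ s hc] at h
  refine h.congr' ?_
  filter_upwards [eventually_gt_atTop (0 : ℝ)] with α hα
  simp only [Pi.div_apply]
  rw [div_div_div_cancel_right₀ hα.ne']
  ring_nf

lemma tendsto_one_add_mul_rpow_div_rpow {c : ℝ} (hc : 0 < c) (p : ℝ) :
    Tendsto (fun α : ℝ => (1 + c * α) ^ p / α ^ p) atTop (𝓝 (c ^ p)) := by
  refine ((tendsto_one_add_mul_div_self c).rpow_const (Or.inl hc.ne')).congr' ?_
  filter_upwards [eventually_gt_atTop (0 : ℝ)] with α hα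
  exact Real.div_rpow (by positivity : (0 : ℝ) ≤ 1 + c * α) hα.le p

lemma phiFam_of_ne {ρ : ℝ} (h0 : ρ ≠ 0) (h1 : ρ ≠ 1) (s : ℝ) :
    PhiFam ρ s = (1 / ρ) * (1 - (1 + (1 - ρ) * s) ^ (-(ρ / (1 - ρ)))) := by
  simp only [PhiFam, if_neg h0, if_neg h1]

lemma phiFamDeriv_of_ne_one {ρ : ℝ} (h1 : ρ ≠ 1) (s : ℝ) :
    PhiFamDeriv ρ s = (1 + (1 - ρ) * s) ^ (-(1 / (1 - ρ))) := by
  by_cases h0 : ρ = 0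
  · simp [PhiFamDeriv, h0, Real.rpow_neg_one]
  · simp only [PhiFamDeriv, if_neg h0, if_neg h1]

lemma tendsto_phiFamDeriv_div_rpow {ρ : ℝ} (hρ : ρ ≤ 0) :
    Tendsto (fun α => PhiFamDeriv ρ α / α ^ (ρ / (ρ - 1) - 1)) atTop
      (𝓝 ((1 - ρ / (ρ - 1)) ^ (1 - ρ / (ρ - 1)))) := by
  have hc : 0 < 1 - ρ := by linarith
  have hexp : ρ / (ρ - 1) - 1 = -(1 / (1 - ρ)) := by
    field_simp [(by linarith : ρ - 1 ≠ 0)]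
    ring
  have hbase : 1 - ρ / (ρ - 1) = (1 - ρ)⁻¹ := by
    field_simp [(by linarith : ρ - 1 ≠ 0)]
    ring
  have hlim : (1 - ρ) ^ (-(1 / (1 - ρ))) = (1 - ρ)⁻¹ ^ (1 - ρ)⁻¹ := by
    rw [Real.rpow_neg hc.le, Real.inv_rpow hc.le, one_div]
  simp only [hexp, hbase, phiFamDeriv_of_ne_one (by linarith : ρ ≠ 1), ← hlim]
  exact tendsto_one_add_mul_rpow_div_rpow hc _

lemma tendsto_phiFam_atTop_of_pos {ρ : ℝ} (h0 : 0 < ρ) (h1 : ρ ≤ 1) :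
    Tendsto (PhiFam ρ) atTop (𝓝 (1 / ρ)) := by
  rcases h1.eq_or_lt with rfl | h1
  · have h := (Real.tendsto_exp_atBot.comp tendsto_neg_atTop_atBot).const_sub (1 : ℝ)
    rw [sub_zero] at h
    rw [div_one]
    exact h.congr fun α => by simp [PhiFam]
  · have hc : 0 < 1 - ρ := by linarith
    have hpow := (tendsto_rpow_neg_atTop (div_pos h0 hc)).comp (tendsto_one_add_mul_atTop hc)
    have h := (hpow.const_sub (1 : ℝ)).const_mul (1 / ρ)
    rw [sub_zero, mul_one] at h
    exact h.congr fun α => (phiFam_of_ne h0.ne' h1.ne α).symm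

lemma tendsto_log_one_add_div_log_one_add {s : ℝ} (hs : 0 < s) :
    Tendsto (fun α => Real.log (1 + α * s) / Real.log (1 + α)) atTop (𝓝 1) := by
  have hlog : Tendsto (fun α : ℝ => Real.log (1 + α)) atTop atTop :=
    Real.tendsto_log_atTop.comp (tendsto_atTop_add_const_left _ 1 tendsto_id)
  refine tendsto_div_of_tendsto_sub hlog (d := Real.log s) ?_
  have hratio := tendsto_one_add_mul_mul_div_one_add_mul one_ne_zero s
  simp only [one_mul] at hratio
  refine ((Real.continuousAt_log hs.ne').tendsto.comp hratio).congr' ?_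
  filter_upwards [eventually_gt_atTop (0 : ℝ)] with α hα
  exact Real.log_div (by positivity) (by positivity)

lemma tendsto_phiFam_ratio_of_nonneg {ρ : ℝ} (h0 : 0 ≤ ρ) (h1 : ρ ≤ 1) {s : ℝ} (hs : 0 < s) :
    Tendsto (fun α => PhiFam ρ (α * s) / PhiFam ρ α) atTop (𝓝 1) := by
  rcases h0.eq_or_lt with rfl | h0
  · simpa [PhiFam] using tendsto_log_one_add_div_log_one_add hs
  · exact tendsto_comp_mul_div_self (tendsto_phiFam_atTop_of_pos h0 h1)
      (one_div_ne_zero h0.ne') hs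

lemma tendsto_phiFam_ratio_of_neg {ρ : ℝ} (hρ : ρ < 0) {s : ℝ} (hs : 0 < s) :
    Tendsto (fun α => PhiFam ρ (α * s) / PhiFam ρ α) atTop (𝓝 (s ^ (ρ / (ρ - 1)))) := by
  have hc : 0 < 1 - ρ := by linarith
  have hγ : -(ρ / (1 - ρ)) = ρ / (ρ - 1) := by rw [← div_neg, neg_sub]
  have hγpos : 0 < ρ / (ρ - 1) := div_pos_of_neg_of_neg hρ (by linarith)
  set B : ℝ → ℝ := fun t => (1 + (1 - ρ) * t) ^ (ρ / (ρ - 1)) with hB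
  have hBtop : Tendsto B atTop atTop :=
    (tendsto_rpow_atTop hγpos).comp (tendsto_one_add_mul_atTop hc)
  have hBratio : Tendsto (fun α => B (α * s) / B α) atTop (𝓝 (s ^ (ρ / (ρ - 1)))) := by
    refine ((tendsto_one_add_mul_mul_div_one_add_mul hc.ne' s).rpow_const
      (Or.inl hs.ne')).congr' ?_
    filter_upwards [eventually_gt_atTop (0 : ℝ)] with α hα
    exact Real.div_rpow (add_pos one_pos (mul_pos hc (mul_pos hα hs))).le
      (add_pos one_pos (mul_pos hc hα)).le _
  refine (tendsto_sub_div_sub_of_tendsto_div hBtop hBratio 1).congr fun α => ?_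
  simp only [phiFam_of_ne hρ.ne (by linarith : ρ ≠ 1), hγ, hB]
  rw [mul_div_mul_left _ _ (one_div_ne_zero hρ.ne), ← neg_div_neg_eq, neg_sub, neg_sub]

theorem stmt_6 (ρ : ℝ) (hρ : ρ ≤ 1) :
    (ρ ≤ 0 →
      ρ / (ρ - 1) ∈ Set.Ico (0:ℝ) 1 ∧
      Filter.Tendsto (fun α => PhiFamDeriv ρ α / α ^ (ρ / (ρ - 1) - 1)) Filter.atTop
        (𝓝 ((1 - ρ / (ρ - 1)) ^ (1 - ρ / (ρ - 1))))) ∧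
    (∀ s : ℝ, 0 < s →
      (0 ≤ ρ →
        Filter.Tendsto (fun α => PhiFam ρ (α * s) / PhiFam ρ α) Filter.atTop (𝓝 1)) ∧
      (ρ < 0 →
        Filter.Tendsto (fun α => PhiFam ρ (α * s) / PhiFam ρ α) Filter.atTop
          (𝓝 (s ^ (ρ / (ρ - 1)))))) := by
  refine ⟨fun hρ0 => ⟨⟨?_, ?_⟩, tendsto_phiFamDeriv_div_rpow hρ0⟩, fun s hs =>
    ⟨fun hρ0 => tendsto_phiFam_ratio_of_nonneg hρ0 hρ hs,
      fun hρ0 => tendsto_phiFam_ratio_of_neg hρ0 hs⟩⟩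
  · exact div_nonneg_of_nonpos hρ0 (by linarith)
  · exact (div_lt_one_of_neg (by linarith)).mpr (by linarith)
end

section
/- Let Φ be a nonzero Bernstein function on (0,∞) with Φ(0+) = 0 and lim_{s→∞} Φ(s)/s = lim_{s→∞} Φ'(s) = 0, with Φ'(0+) < ∞ and Φ''(0+) > −∞, extended to [0,∞) by Φ(0) = 0. Let z ∈ ℝ, λ > 0 and J₁(b) = (1/2)(z − b)² + λΦ(|b|). Suppose λ ≤ −1/Φ''(0+). Then: (i) if |z| ≤ λΦ'(0+), b = 0 is a global minimizer of J₁ over ℝ; (ii) if |z| > λΦ'(0+), the equation b + λΦ'(b) = |z| has a unique root κ in the interval (0, |z|), and sgn(z)·κ is the unique global minimizer of J₁ over ℝ. -/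
open Set Filter Topology

lemma cm_zero_step (F : ℕ → ℝ → ℝ) (hnn : ∀ k t, 0 < t → 0 ≤ F k t)
    (hder : ∀ k t, 0 < t → HasDerivAt (F k) (-F (k+1) t) t) (s : ℝ) (hs : 0 < s)
    (hz : ∀ t, s < t → F 0 t = 0) : ∀ t, 3 * s / 4 < t → F 0 t = 0 := by
  have hzall : ∀ k t, s < t → F k t = 0 := by
    intro k
    induction k with
    | zero => exact hz
    | succ k ih =>
      intro t ht
      have hev : F k =ᶠ[𝓝 t] fun _ => 0 := by
        filter_upwards [Ioi_mem_nhds ht] with u hu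
        exact ih u hu
      have h1 := (hder k t (by linarith)).deriv
      rw [hev.deriv_eq, deriv_const] at h1
      linarith
  have hanti : ∀ k, AntitoneOn (F k) (Ioi 0) := by
    intro k
    refine antitoneOn_of_hasDerivWithinAt_nonpos (convex_Ioi 0)
      (fun t ht => (hder k t ht).continuousAt.continuousWithinAt) (f' := fun t => -F (k+1) t) ?_ ?_
    · rw [interior_Ioi]; exact fun t ht => (hder k t ht).hasDerivWithinAt
    · rw [interior_Ioi]; intro t ht; have := hnn (k+1) t ht; linarith
  have hpowd : ∀ (b C t : ℝ) (n : ℕ), HasDerivAt (fun t => C * (b - t)^(n+1) / ((n+1).factorial : ℝ))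
      (-(C * (b - t)^n / (n.factorial : ℝ))) t := by
    intro b C t n
    have h0 : HasDerivAt (fun x : ℝ => b - x) (-1) t := by simpa using (hasDerivAt_id t).const_sub b
    have h1 := ((h0.pow (n+1)).const_mul C).div_const ((n+1).factorial : ℝ)
    refine h1.congr_deriv ?_
    rw [Nat.add_sub_cancel, Nat.factorial_succ]
    push_cast
    have hn : (n.factorial : ℝ) ≠ 0 := by positivity
    field_simp
  obtain ⟨a, ha⟩ : ∃ a : ℝ, a = 5 * s / 4 := ⟨_, rfl⟩
  have hA : ∀ n k t, 0 < t → t ≤ a → F k t ≤ F (k+n) t * (a - t)^n / (n.factorial : ℝ) := by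
    intro n
    induction n with
    | zero => intro k t _ _; simp
    | succ n ih =>
      intro k x hx hxa
      set C := F (k + (n+1)) x with hC
      have hhd : ∀ t, 0 < t → HasDerivAt (fun t => F k t - C * (a - t)^(n+1) / ((n+1).factorial : ℝ))
          (-F (k+1) t + C * (a - t)^n / (n.factorial : ℝ)) t := by
        intro t ht
        exact ((hder k t ht).sub (hpowd a C t n)).congr_deriv (by ring)
      have hmono : MonotoneOn (fun t => F k t - C * (a - t)^(n+1) / ((n+1).factorial : ℝ)) (Icc x a) := by
        refine monotoneOn_of_hasDerivWithinAt_nonneg (convex_Icc x a)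
          (fun t ht => (hhd t (by linarith [ht.1])).continuousAt.continuousWithinAt)
          (f' := fun t => -F (k+1) t + C * (a - t)^n / (n.factorial : ℝ)) ?_ ?_
        · rw [interior_Icc]; exact fun t ht => (hhd t (by linarith [ht.1])).hasDerivWithinAt
        · rw [interior_Icc]; intro t ht
          have h1 := ih (k+1) t (by linarith [ht.1]) ht.2.le
          have h2 : F (k+1+n) t ≤ C := by
            rw [hC, show k + (n+1) = k+1+n by ring]
            exact hanti _ (mem_Ioi.mpr hx) (mem_Ioi.mpr (by linarith [ht.1])) ht.1.le
          have h3 : 0 ≤ (a - t)^n / (n.factorial : ℝ) := by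
            have : 0 ≤ a - t := by linarith [ht.2]
            positivity
          have h4 : F (k+1+n) t * (a-t)^n / (n.factorial:ℝ) ≤ C * (a-t)^n/(n.factorial:ℝ) := by
            rw [mul_div_assoc, mul_div_assoc]; exact mul_le_mul_of_nonneg_right h2 h3
          linarith
      have := hmono (left_mem_Icc.mpr hxa) (right_mem_Icc.mpr hxa) hxa
      have hFa : F k a = 0 := hzall k a (by rw [ha]; linarith)
      simp only at this
      rw [sub_self, zero_pow (by omega), hFa, mul_zero, zero_div] at this
      linarith
  have hB : ∀ n k u t, 0 < u → u ≤ t → F (k+n) t * (t - u)^n / (n.factorial : ℝ) ≤ F k u := by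
    intro n
    induction n with
    | zero =>
      intro k u t hu hut
      simp
      exact hanti k (mem_Ioi.mpr hu) (mem_Ioi.mpr (by linarith)) hut
    | succ n ih =>
      intro k u x hu hux
      set C := F (k + (n+1)) x with hC
      have hhd : ∀ t, 0 < t → HasDerivAt (fun t => F k t - C * (x - t)^(n+1) / ((n+1).factorial : ℝ))
          (-F (k+1) t + C * (x - t)^n / (n.factorial : ℝ)) t := by
        intro t ht
        exact ((hder k t ht).sub (hpowd x C t n)).congr_deriv (by ring)
      have hant : AntitoneOn (fun t => F k t - C * (x - t)^(n+1) / ((n+1).factorial : ℝ)) (Icc u x) := by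
        refine antitoneOn_of_hasDerivWithinAt_nonpos (convex_Icc u x)
          (fun t ht => (hhd t (by linarith [ht.1])).continuousAt.continuousWithinAt)
          (f' := fun t => -F (k+1) t + C * (x - t)^n / (n.factorial : ℝ)) ?_ ?_
        · rw [interior_Icc]; exact fun t ht => (hhd t (by linarith [ht.1])).hasDerivWithinAt
        · rw [interior_Icc]; intro t ht
          have h1 := ih (k+1) t x (by linarith [ht.1]) ht.2.le
          rw [show k + 1 + n = k + (n+1) by ring, ← hC] at h1
          linarith
      have := hant (left_mem_Icc.mpr hux) (right_mem_Icc.mpr hux) hux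
      have hFx : 0 ≤ F k x := hnn k x (by linarith)
      simp only at this
      rw [sub_self, zero_pow (by omega), mul_zero, zero_div] at this
      linarith
  intro t ht
  by_cases hts : s < t
  · exact hzall 0 t hts
  push_neg at hts
  obtain ⟨u, hu⟩ : ∃ u : ℝ, u = s / 4 := ⟨_, rfl⟩
  have htu : 0 < t - u := by rw [hu]; linarith
  have hat : 0 ≤ a - t := by rw [ha]; linarith
  have hq : ∀ n : ℕ, F 0 t ≤ F 0 u * ((a - t)/(t - u))^n := by
    intro n
    have h1 := hA n 0 t (by linarith) (by rw [ha]; linarith)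
    have h2 := hB n 0 u t (by rw [hu]; positivity) (by linarith)
    simp only [zero_add] at h1 h2
    have e : F n t * (a-t)^n / (n.factorial : ℝ) =
        (F n t * (t-u)^n / (n.factorial : ℝ)) * ((a-t)/(t-u))^n := by
      rw [div_pow]; field_simp
    have hq0 : 0 ≤ ((a-t)/(t-u))^n := by positivity
    calc F 0 t ≤ _ := h1
      _ = _ := e
      _ ≤ F 0 u * ((a-t)/(t-u))^n := mul_le_mul_of_nonneg_right h2 hq0
  have hlt1 : (a - t)/(t - u) < 1 := by
    rw [div_lt_one htu, ha, hu]; linarith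
  have hlim : Tendsto (fun n : ℕ => F 0 u * ((a - t)/(t - u))^n) atTop (𝓝 (F 0 u * 0)) :=
    (tendsto_pow_atTop_nhds_zero_of_lt_one (div_nonneg hat htu.le) hlt1).const_mul _
  have := ge_of_tendsto' hlim hq
  rw [mul_zero] at this
  exact le_antisymm this (hnn 0 t (by linarith))

theorem stmt_7 (Φ : ℝ → ℝ) (hB : IsBernstein Φ)
    (hnz : ∃ s, 0 < s ∧ 0 < Φ s)
    (h0 : Filter.Tendsto Φ (𝓝[>] (0:ℝ)) (𝓝 0))
    (hΦ0 : Φ 0 = 0)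
    (hlin : Filter.Tendsto (fun s => Φ s / s) Filter.atTop (𝓝 0))
    (hdtop : Filter.Tendsto (deriv Φ) Filter.atTop (𝓝 0))
    (d : ℝ) (hd : Filter.Tendsto (deriv Φ) (𝓝[>] (0:ℝ)) (𝓝 d))
    (c : ℝ) (hc : Filter.Tendsto (deriv (deriv Φ)) (𝓝[>] (0:ℝ)) (𝓝 c))
    (z lam : ℝ) (hlam : 0 < lam)
    (J₁ : ℝ → ℝ) (hJ : J₁ = fun b => (1/2) * (z - b)^2 + lam * Φ |b|)
    (hcase : lam ≤ -(1/c)) :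
    (|z| ≤ lam * d → ∀ b : ℝ, J₁ 0 ≤ J₁ b) ∧
    (lam * d < |z| →
      ∃ κ ∈ Set.Ioo (0:ℝ) |z|,
        (κ + lam * deriv Φ κ = |z|) ∧
        (∀ κ' ∈ Set.Ioo (0:ℝ) |z|, κ' + lam * deriv Φ κ' = |z| → κ' = κ) ∧
        (∀ b : ℝ, b ≠ Real.sign z * κ → J₁ (Real.sign z * κ) < J₁ b)) := by
  obtain ⟨hsm, hnn, hsign⟩ := hB
  set D : ℝ → ℝ := deriv Φ with hDdef
  set D2 : ℝ → ℝ := deriv D with hD2def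
  set D3 : ℝ → ℝ := deriv D2 with hD3def
  -- smoothness of derivatives
  have hsmD : ContDiffOn ℝ (⊤ : ℕ∞) D (Ioi 0) := hsm.deriv_of_isOpen isOpen_Ioi (by simp)
  have hsmD2 : ContDiffOn ℝ (⊤ : ℕ∞) D2 (Ioi 0) := hsmD.deriv_of_isOpen isOpen_Ioi (by simp)
  have hsmD3 : ContDiffOn ℝ (⊤ : ℕ∞) D3 (Ioi 0) := hsmD2.deriv_of_isOpen isOpen_Ioi (by simp)
  have hdiff : ∀ f : ℝ → ℝ, ContDiffOn ℝ (⊤ : ℕ∞) f (Ioi 0) → ∀ s : ℝ, 0 < s →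
      DifferentiableAt ℝ f s := fun f hf s hs =>
    ((hf.differentiableOn (by simp)).differentiableAt (isOpen_Ioi.mem_nhds hs))
  have hΦdiff := hdiff Φ hsm
  have hDdiff := hdiff D hsmD
  have hD2diff := hdiff D2 hsmD2
  have hcontD : ContinuousOn D (Ioi 0) := hsmD.continuousOn
  have hcontD2 : ContinuousOn D2 (Ioi 0) := hsmD2.continuousOn
  have hcontD3 : ContinuousOn D3 (Ioi 0) := hsmD3.continuousOn
  -- sign facts
  have hit2 : iteratedDeriv 2 Φ = D2 := by
    rw [hD2def, hDdef, iteratedDeriv_succ, iteratedDeriv_one]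
  have hit3 : iteratedDeriv 3 Φ = D3 := by
    rw [hD3def, iteratedDeriv_succ, hit2]
  have hit4 : iteratedDeriv 4 Φ = deriv D3 := by
    rw [iteratedDeriv_succ, hit3]
  have hDnn : ∀ s : ℝ, 0 < s → 0 ≤ D s := by
    intro s hs
    have h := hsign 1 le_rfl s hs
    simpa [iteratedDeriv_one] using h
  have hD2np : ∀ s : ℝ, 0 < s → D2 s ≤ 0 := by
    intro s hs
    have h := hsign 2 (by norm_num) s hs
    rw [hit2] at h; norm_num at h; linarith
  have hD3nn : ∀ s : ℝ, 0 < s → 0 ≤ D3 s := by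
    intro s hs
    have h := hsign 3 (by norm_num) s hs
    rw [hit3] at h; norm_num at h; linarith
  have hD4np : ∀ s : ℝ, 0 < s → deriv D3 s ≤ 0 := by
    intro s hs
    have h := hsign 4 (by norm_num) s hs
    rw [hit4] at h; norm_num at h; linarith
  -- monotonicity
  have convIoi : Convex ℝ (Ioi (0:ℝ)) := convex_Ioi 0
  have hD_anti : AntitoneOn D (Ioi 0) := by
    refine antitoneOn_of_deriv_nonpos convIoi hcontD ?_ ?_
    · rw [interior_Ioi]; exact fun s hs => (hDdiff s hs).differentiableWithinAt
    · rw [interior_Ioi]; exact fun s hs => hD2np s hs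
  have hD2_mono : MonotoneOn D2 (Ioi 0) := by
    refine monotoneOn_of_deriv_nonneg convIoi hcontD2 ?_ ?_
    · rw [interior_Ioi]; exact fun s hs => (hD2diff s hs).differentiableWithinAt
    · rw [interior_Ioi]; exact fun s hs => hD3nn s hs
  have hD3_anti : AntitoneOn D3 (Ioi 0) := by
    refine antitoneOn_of_deriv_nonpos convIoi hcontD3 ?_ ?_
    · rw [interior_Ioi]; exact fun s hs => (hdiff D3 hsmD3 s hs).differentiableWithinAt
    · rw [interior_Ioi]; exact fun s hs => hD4np s hs
  -- limit comparisons
  have hmemIoo : ∀ s : ℝ, 0 < s → Ioo (0:ℝ) s ∈ 𝓝[>] (0:ℝ) := fun s hs =>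
    Ioo_mem_nhdsGT_of_mem ⟨le_rfl, hs⟩
  have hd_ub : ∀ s : ℝ, 0 < s → D s ≤ d := by
    intro s hs
    refine ge_of_tendsto hd ?_
    filter_upwards [hmemIoo s hs] with t ht
    exact hD_anti (mem_Ioi.mpr ht.1) (mem_Ioi.mpr hs) ht.2.le
  have hc_lb : ∀ s : ℝ, 0 < s → c ≤ D2 s := by
    intro s hs
    refine le_of_tendsto hc ?_
    filter_upwards [hmemIoo s hs] with t ht
    exact hD2_mono (mem_Ioi.mpr ht.1) (mem_Ioi.mpr hs) ht.2.le
  have hd_nn : 0 ≤ d := by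
    refine ge_of_tendsto hd ?_
    filter_upwards [self_mem_nhdsWithin] with t ht
    exact hDnn t ht
  have hcneg : c < 0 := by
    have h1 : (0:ℝ) < -(1/c) := lt_of_lt_of_le hlam hcase
    have h2 : 1/c < 0 := by linarith
    exact one_div_neg.mp h2
  have hlc : 0 ≤ 1 + lam * c := by
    have h2 : lam * (-c) ≤ -(1/c) * (-c) := by
      exact mul_le_mul_of_nonneg_right hcase (by linarith)
    have h3 : (1/c) * c = 1 := one_div_mul_cancel hcneg.ne
    nlinarith
  -- D2 is strictly above c
  have hD2gt : ∀ s : ℝ, 0 < s → c < D2 s := by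
    intro s₀ hs₀
    by_contra hcon
    push_neg at hcon
    have heq : D2 s₀ = c := le_antisymm hcon (hc_lb s₀ hs₀)
    have hflat : ∀ t : ℝ, 0 < t → t ≤ s₀ → D2 t = c := fun t ht hts =>
      le_antisymm (heq ▸ hD2_mono (mem_Ioi.mpr ht) (mem_Ioi.mpr hs₀) hts) (hc_lb t ht)
    have hhalf : (0:ℝ) < s₀ / 2 := by linarith
    have hD3z : D3 (s₀ / 2) = 0 := by
      have hev : D2 =ᶠ[𝓝 (s₀ / 2)] fun _ => c := by
        filter_upwards [Ioo_mem_nhds hhalf (by linarith : s₀ / 2 < s₀)] with t ht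
        exact hflat t ht.1 ht.2.le
      rw [hD3def, hev.deriv_eq, deriv_const]
    have hD3z' : ∀ u : ℝ, s₀ / 2 ≤ u → D3 u = 0 := fun u hu =>
      le_antisymm (hD3z ▸ hD3_anti (mem_Ioi.mpr hhalf)
        (mem_Ioi.mpr (lt_of_lt_of_le hhalf hu)) hu)
        (hD3nn u (lt_of_lt_of_le hhalf hu))
    -- D2 is constant (= c) on [s₀/2, ∞)
    have hD2anti : AntitoneOn D2 (Ici (s₀ / 2)) := by
      refine antitoneOn_of_deriv_nonpos (convex_Ici _) (hcontD2.mono ?_) ?_ ?_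
      · exact fun u hu => lt_of_lt_of_le hhalf hu
      · rw [interior_Ici]
        exact fun u hu => (hD2diff u (lt_trans hhalf hu)).differentiableWithinAt
      · rw [interior_Ici]
        intro u hu
        rw [← hD3def, hD3z' u (le_of_lt hu)]
    have hD2const : ∀ u : ℝ, s₀ / 2 ≤ u → D2 u = c := by
      intro u hu
      refine le_antisymm ?_ (hc_lb u (lt_of_lt_of_le hhalf hu))
      have := hD2anti (self_mem_Ici) (mem_Ici.mpr hu) hu
      rwa [hflat (s₀ / 2) hhalf (by linarith)] at this
    -- then D decreases linearly, contradiction with D ≥ 0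
    have hanti : AntitoneOn (fun u => D u - c * u) (Ici (s₀ / 2)) := by
      refine antitoneOn_of_hasDerivWithinAt_nonpos (convex_Ici _)
        ((hcontD.mono (fun u hu => lt_of_lt_of_le hhalf hu)).sub
          ((continuous_const.mul continuous_id).continuousOn)) (f' := fun u => D2 u - c) ?_ ?_
      · rw [interior_Ici]
        intro u hu
        have h1 : HasDerivAt (fun u => D u - c * u) (D2 u - c) u := by
          have := ((hDdiff u (lt_trans hhalf hu)).hasDerivAt).sub
            ((hasDerivAt_id u).const_mul c)
          rw [mul_one] at this; exact this
        exact h1.hasDerivWithinAt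
      · rw [interior_Ici]
        intro u hu
        show D2 u - c ≤ 0
        rw [hD2const u hu.le]
        simp
    set u₀ : ℝ := s₀ / 2 + (D (s₀ / 2) + 1) / (-c) with hu₀
    have hDhalfnn : 0 ≤ D (s₀ / 2) := hDnn _ hhalf
    have hu₀ge : s₀ / 2 ≤ u₀ := by
      have : 0 < (D (s₀ / 2) + 1) / (-c) := div_pos (by linarith) (by linarith)
      linarith
    have hkey := hanti self_mem_Ici (mem_Ici.mpr hu₀ge) hu₀ge
    simp only [] at hkey
    have hDu₀ : 0 ≤ D u₀ := hDnn _ (lt_of_lt_of_le hhalf hu₀ge)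
    have hcterm : c * ((D (s₀ / 2) + 1) / (-c)) = -(D (s₀ / 2) + 1) := by
      field_simp [hcneg.ne]
    have hcalc : c * u₀ = c * (s₀ / 2) - (D (s₀ / 2) + 1) := by
      rw [hu₀, mul_add, hcterm]; ring
    rw [hcalc] at hkey
    linarith
  -- lower bound for D: D s ≥ d + c * s
  have hDlb : ∀ s : ℝ, 0 < s → d + c * s ≤ D s := by
    intro s hs
    have hmono : MonotoneOn (fun u => D u - c * u) (Ioi 0) := by
      refine monotoneOn_of_hasDerivWithinAt_nonneg convIoi
        (hcontD.sub ((continuous_const.mul continuous_id).continuousOn))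
        (f' := fun u => D2 u - c) ?_ ?_
      · rw [interior_Ioi]
        intro u hu
        have h1 : HasDerivAt (fun u => D u - c * u) (D2 u - c) u := by
          have := ((hDdiff u hu).hasDerivAt).sub ((hasDerivAt_id u).const_mul c)
          rw [mul_one] at this; exact this
        exact h1.hasDerivWithinAt
      · rw [interior_Ioi]
        intro u hu
        show 0 ≤ D2 u - c
        have := hc_lb u hu
        linarith
    have hten : Tendsto (fun t => D t - c * t) (𝓝[>] (0:ℝ)) (𝓝 (d - c * 0)) := by
      exact hd.sub ((((continuous_const.mul continuous_id).tendsto 0).mono_left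
        nhdsWithin_le_nhds))
    rw [mul_zero, sub_zero] at hten
    have : d ≤ D s - c * s := by
      refine le_of_tendsto hten ?_
      filter_upwards [hmemIoo s hs] with t ht
      exact hmono (mem_Ioi.mpr ht.1) (mem_Ioi.mpr hs) ht.2.le
    linarith
  -- D is strictly positive (via the identity theorem for analytic functions)
  have hDpos : ∀ s : ℝ, 0 < s → 0 < D s := by
    intro s₀ hs₀
    by_contra hcon
    push_neg at hcon
    have heq : D s₀ = 0 := le_antisymm hcon (hDnn s₀ hs₀)
    have hzero_ge : ∀ u : ℝ, s₀ ≤ u → D u = 0 := fun u hu =>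
      le_antisymm (heq ▸ hD_anti (mem_Ioi.mpr hs₀) (mem_Ioi.mpr (lt_of_lt_of_le hs₀ hu)) hu)
        (hDnn u (lt_of_lt_of_le hs₀ hu))
    have hDzero : EqOn D 0 (Ioi 0) := by
      have hcdk : ∀ k : ℕ, ContDiffOn ℝ (⊤ : ℕ∞) (iteratedDeriv k Φ) (Ioi 0) := by
        intro k
        induction k with
        | zero => simpa using hsm
        | succ k ih =>
          rw [iteratedDeriv_succ]
          exact ih.deriv_of_isOpen isOpen_Ioi (by simp)
      set F : ℕ → ℝ → ℝ := fun k t => (-1:ℝ)^k * iteratedDeriv (k+1) Φ t with hFdef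
      have hFnn : ∀ k t, 0 < t → 0 ≤ F k t := by
        intro k t ht
        have := hsign (k+1) (by omega) t ht
        simpa using this
      have hFder : ∀ k t, 0 < t → HasDerivAt (F k) (-F (k+1) t) t := by
        intro k t ht
        have h1 := ((hdiff _ (hcdk (k+1)) t ht).hasDerivAt).const_mul ((-1:ℝ)^k)
        refine h1.congr_deriv ?_
        show (-1:ℝ)^k * deriv (iteratedDeriv (k+1) Φ) t = -((-1:ℝ)^(k+1) * iteratedDeriv (k+1+1) Φ t)
        rw [show iteratedDeriv (k+1+1) Φ = deriv (iteratedDeriv (k+1) Φ) from iteratedDeriv_succ]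
        ring
      have hz0 : ∀ t, s₀ < t → F 0 t = 0 := by
        intro t ht
        show (-1:ℝ)^0 * iteratedDeriv (0+1) Φ t = 0
        rw [pow_zero, one_mul, zero_add, iteratedDeriv_one]
        exact hzero_ge t ht.le
      have hiter : ∀ m : ℕ, ∀ t, s₀ * (3/4)^m < t → F 0 t = 0 := by
        intro m
        induction m with
        | zero =>
          intro t ht
          rw [pow_zero, mul_one] at ht
          exact hz0 t ht
        | succ m ih =>
          intro t ht
          have e : 3 * (s₀ * (3/4)^m) / 4 = s₀ * (3/4)^(m+1) := by ring
          exact cm_zero_step F hFnn hFder (s₀ * (3/4)^m) (by positivity) ih t (by linarith)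
      intro t ht
      have ht' : (0:ℝ) < t := ht
      obtain ⟨m, hm⟩ := exists_pow_lt_of_lt_one (div_pos ht' hs₀) (by norm_num : (3/4:ℝ) < 1)
      have hlt : s₀ * (3/4)^m < t := by rw [lt_div_iff₀ hs₀] at hm; linarith
      have h' : (-1:ℝ)^0 * iteratedDeriv (0+1) Φ t = 0 := hiter m t hlt
      rw [pow_zero, one_mul, zero_add, iteratedDeriv_one] at h'
      exact h'
    have hD2zero : ∀ t : ℝ, 0 < t → D2 t = 0 := by
      intro t ht
      have hev : D =ᶠ[𝓝 t] fun _ => 0 := by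
        filter_upwards [Ioi_mem_nhds ht] with u hu
        exact hDzero hu
      rw [hD2def, hev.deriv_eq, deriv_const]
    have hc' : Tendsto D2 (𝓝[>] (0:ℝ)) (𝓝 0) := by
      refine Tendsto.congr' ?_ tendsto_const_nhds
      filter_upwards [self_mem_nhdsWithin] with t ht
      exact (hD2zero t ht).symm
    have : c = 0 := tendsto_nhds_unique hc hc'
    linarith
  -- the function g
  set g : ℝ → ℝ := fun s => s + lam * D s with hgdef
  have hgderiv : ∀ s : ℝ, 0 < s → HasDerivAt g (1 + lam * D2 s) s := by
    intro s hs
    have := (hasDerivAt_id s).add (((hDdiff s hs).hasDerivAt).const_mul lam)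
    exact this
  have hgcont : ContinuousOn g (Ioi 0) := by
    exact continuousOn_id.add (continuousOn_const.mul hcontD)
  have hgpos : ∀ s ∈ interior (Ioi (0:ℝ)), 0 < deriv g s := by
    rw [interior_Ioi]
    intro s hs
    rw [(hgderiv s hs).deriv]
    have h1 : lam * c < lam * D2 s := mul_lt_mul_of_pos_left (hD2gt s hs) hlam
    linarith
  have hgmono : StrictMonoOn g (Ioi 0) := strictMonoOn_of_deriv_pos convIoi hgcont hgpos
  have hg0 : Tendsto g (𝓝[>] (0:ℝ)) (𝓝 (lam * d)) := by
    have h1 : Tendsto (fun s : ℝ => s) (𝓝[>] (0:ℝ)) (𝓝 0) :=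
      tendsto_id.mono_right nhdsWithin_le_nhds
    have := h1.add (hd.const_mul lam)
    simpa using this
  have hglb : ∀ s : ℝ, 0 < s → lam * d ≤ g s := by
    intro s hs
    have h1 := hDlb s hs
    have h2 : lam * (d + c * s) ≤ lam * D s := mul_le_mul_of_nonneg_left h1 hlam.le
    have : g s = s + lam * D s := rfl
    nlinarith
  -- the symmetrized objective
  set Z : ℝ := |z| with hZdef
  have hZnn : 0 ≤ Z := abs_nonneg z
  set G : ℝ → ℝ := fun b => (1/2) * (Z - b)^2 + lam * Φ |b| with hGdef
  -- continuity of Φ on [0,∞)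
  have hΦcont0 : ContinuousOn Φ (Ici 0) := by
    intro x hx
    rcases eq_or_lt_of_le (mem_Ici.mp hx) with hx0 | hx0
    · subst hx0
      unfold ContinuousWithinAt
      rw [hΦ0]
      have hsplit : 𝓝[Ici (0:ℝ)] (0:ℝ) = 𝓝[>] (0:ℝ) ⊔ 𝓝[{0}] (0:ℝ) := by
        rw [← nhdsWithin_union, Ioi_union_left]
      rw [hsplit, nhdsWithin_singleton]
      rw [tendsto_sup]
      refine ⟨h0, ?_⟩
      have := tendsto_pure_nhds Φ 0
      rwa [hΦ0] at this
    · exact ((hΦdiff x hx0).continuousAt).continuousWithinAt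
  have hGcontIci : ContinuousOn G (Ici 0) := by
    have hbase : ContinuousOn (fun b : ℝ => (1/2) * (Z - b)^2 + lam * Φ b) (Ici 0) := by
      refine ContinuousOn.add ?_ (continuousOn_const.mul hΦcont0)
      exact (continuous_const.mul ((continuous_const.sub continuous_id).pow 2)).continuousOn
    refine hbase.congr ?_
    intro b hb
    simp [hGdef, abs_of_nonneg (mem_Ici.mp hb)]
  have hGcontIic : ContinuousOn G (Iic 0) := by
    have hbase : ContinuousOn (fun b : ℝ => (1/2) * (Z - b)^2 + lam * Φ (-b)) (Iic 0) := by
      refine ContinuousOn.add ?_ (continuousOn_const.mul ?_)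
      · exact (continuous_const.mul ((continuous_const.sub continuous_id).pow 2)).continuousOn
      · exact hΦcont0.comp continuous_neg.continuousOn
          (fun b hb => mem_Ici.mpr (by simpa using mem_Iic.mp hb))
    refine hbase.congr ?_
    intro b hb
    simp [hGdef, abs_of_nonpos (mem_Iic.mp hb)]
  -- derivative of G on positives and negatives
  have hGderiv_pos : ∀ b : ℝ, 0 < b → HasDerivAt G (g b - Z) b := by
    intro b hb
    have hq : HasDerivAt (fun x : ℝ => (1/2) * (Z - x)^2) (b - Z) b := by
      have h1 : HasDerivAt (fun x : ℝ => Z - x) (-1) b := by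
        simpa using (hasDerivAt_id b).const_sub Z
      have h2 := (h1.pow 2).const_mul (1/2 : ℝ)
      refine h2.congr_deriv ?_
      ring
    have hΦb : HasDerivAt (fun x : ℝ => lam * Φ x) (lam * D b) b :=
      ((hΦdiff b hb).hasDerivAt).const_mul lam
    have hsum := hq.add hΦb
    have hev : G =ᶠ[𝓝 b] fun x => (1/2) * (Z - x)^2 + lam * Φ x := by
      filter_upwards [Ioi_mem_nhds hb] with x hx
      simp [hGdef, abs_of_pos (mem_Ioi.mp hx)]
    have := hsum.congr_of_eventuallyEq hev
    refine this.congr_deriv ?_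
    simp only [hgdef]; ring
  have hGderiv_neg : ∀ b : ℝ, b < 0 → HasDerivAt G (b - Z - lam * D (-b)) b := by
    intro b hb
    have hq : HasDerivAt (fun x : ℝ => (1/2) * (Z - x)^2) (b - Z) b := by
      have h1 : HasDerivAt (fun x : ℝ => Z - x) (-1) b := by
        simpa using (hasDerivAt_id b).const_sub Z
      have h2 := (h1.pow 2).const_mul (1/2 : ℝ)
      refine h2.congr_deriv ?_
      ring
    have hΦb : HasDerivAt (fun x : ℝ => lam * Φ (-x)) (-(lam * D (-b))) b := by
      have h1 : HasDerivAt (fun x : ℝ => Φ (-x)) (D (-b) * (-1)) b :=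
        ((hΦdiff (-b) (by linarith)).hasDerivAt).comp b (hasDerivAt_neg b)
      have := h1.const_mul lam
      refine this.congr_deriv ?_
      ring
    have hsum := hq.add hΦb
    have hev : G =ᶠ[𝓝 b] fun x => (1/2) * (Z - x)^2 + lam * Φ (-x) := by
      filter_upwards [Iio_mem_nhds hb] with x hx
      simp [hGdef, abs_of_neg (mem_Iio.mp hx)]
    have := hsum.congr_of_eventuallyEq hev
    refine this.congr_deriv (by ring)
  -- G is strictly decreasing on (-∞, 0]
  have hGanti_neg : StrictAntiOn G (Iic 0) := by
    refine strictAntiOn_of_deriv_neg (convex_Iic 0) hGcontIic ?_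
    rw [interior_Iic]
    intro x hx
    rw [(hGderiv_neg x hx).deriv]
    have h1 : 0 ≤ lam * D (-x) := mul_nonneg hlam.le (hDnn _ (by linarith [mem_Iio.mp hx]))
    have := mem_Iio.mp hx
    linarith
  -- the sign variable
  set sgn : ℝ := if z < 0 then -1 else 1 with hsgn
  have hs2 : sgn * sgn = 1 := by
    rw [hsgn]; split <;> norm_num
  have hsz : sgn * z = Z := by
    rw [hsgn, hZdef]
    rcases lt_or_ge z 0 with h | h
    · simp [h, abs_of_neg h]
    · simp [not_lt.mpr h, abs_of_nonneg h]
  have habs : ∀ b : ℝ, |sgn * b| = |b| := by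
    intro b
    rw [abs_mul, hsgn]
    split <;> norm_num
  have hJG : ∀ b : ℝ, J₁ b = G (sgn * b) := by
    intro b
    rw [hJ, hGdef]
    simp only []
    rw [habs b]
    have hsq : (Z - sgn * b)^2 = (z - b)^2 := by
      rw [← hsz]
      have : sgn * z - sgn * b = sgn * (z - b) := by ring
      rw [this, mul_pow]
      nlinarith [hs2]
    rw [hsq]
  constructor
  · -- case (i)
    intro hle b
    have hkey : ∀ y : ℝ, G 0 ≤ G y := by
      intro y
      rcases le_or_gt 0 y with hy | hy
      · have hmono : MonotoneOn G (Ici 0) := by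
          refine monotoneOn_of_deriv_nonneg (convex_Ici 0) hGcontIci ?_ ?_
          · rw [interior_Ici]
            exact fun x hx => (hGderiv_pos x hx).differentiableAt.differentiableWithinAt
          · rw [interior_Ici]
            intro x hx
            rw [(hGderiv_pos x hx).deriv]
            have := hglb x hx
            linarith
        exact hmono self_mem_Ici (mem_Ici.mpr hy) hy
      · exact le_of_lt (hGanti_neg (mem_Iic.mpr hy.le) self_mem_Iic hy)
    rw [hJG b, hJG 0, mul_zero]
    exact hkey (sgn * b)
  · -- case (ii)
    intro hlt
    have hZpos : 0 < Z := lt_of_le_of_lt (mul_nonneg hlam.le hd_nn) hlt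
    -- find ε with g ε < Z
    have hev : ∀ᶠ t in 𝓝[>] (0:ℝ), g t < Z ∧ t ∈ Ioo (0:ℝ) Z := by
      filter_upwards [hg0 (Iio_mem_nhds hlt), hmemIoo Z hZpos] with t h1 h2
      exact ⟨h1, h2⟩
    obtain ⟨ε, hgε, hε⟩ := hev.exists
    have hgZ : Z < g Z := by
      have h1 := hDpos Z hZpos
      have : g Z = Z + lam * D Z := rfl
      nlinarith
    have hsub : Icc ε Z ⊆ Ioi 0 := fun u hu => lt_of_lt_of_le hε.1 hu.1
    obtain ⟨κ, hκmem, hκ⟩ := intermediate_value_Icc hε.2.le (hgcont.mono hsub)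
      ⟨hgε.le, hgZ.le⟩
    have hκIoo : κ ∈ Ioo 0 Z := by
      constructor
      · exact lt_of_lt_of_le hε.1 hκmem.1
      · rcases eq_or_lt_of_le hκmem.2 with h | h
        · exfalso; rw [h] at hκ; rw [hκ] at hgZ; exact lt_irrefl _ hgZ
        · exact h
    have hκpos : 0 < κ := hκIoo.1
    -- the strict minimality claim for G
    have hGmin : ∀ y : ℝ, y ≠ κ → G κ < G y := by
      have hanti01 : StrictAntiOn G (Icc 0 κ) := by
        refine strictAntiOn_of_deriv_neg (convex_Icc 0 κ) (hGcontIci.mono Icc_subset_Ici_self) ?_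
        rw [interior_Icc]
        intro x hx
        rw [(hGderiv_pos x hx.1).deriv]
        have : g x < g κ := hgmono (mem_Ioi.mpr hx.1) (mem_Ioi.mpr hκpos) hx.2
        rw [hκ] at this
        linarith
      have hmono2 : StrictMonoOn G (Ici κ) := by
        refine strictMonoOn_of_deriv_pos (convex_Ici κ) (hGcontIci.mono ?_) ?_
        · exact fun u hu => le_trans hκpos.le hu
        · rw [interior_Ici]
          intro x hx
          rw [(hGderiv_pos x (lt_trans hκpos hx)).deriv]
          have : g κ < g x := hgmono (mem_Ioi.mpr hκpos) (mem_Ioi.mpr (lt_trans hκpos hx)) hx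
          rw [hκ] at this
          linarith
      intro y hy
      rcases lt_trichotomy y κ with h | h | h
      · rcases le_or_gt 0 y with h0 | h0
        · exact hanti01 (mem_Icc.mpr ⟨h0, h.le⟩) (mem_Icc.mpr ⟨hκpos.le, le_rfl⟩) h
        · have hG0 : G κ < G 0 :=
            hanti01 (mem_Icc.mpr ⟨le_rfl, hκpos.le⟩) (mem_Icc.mpr ⟨hκpos.le, le_rfl⟩) hκpos
          have : G 0 < G y := hGanti_neg (mem_Iic.mpr h0.le) self_mem_Iic h0
          linarith
      · exact absurd h hy
      · exact hmono2 (mem_Ici.mpr le_rfl) (mem_Ici.mpr h.le) h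
    -- assemble
    have hzne : z ≠ 0 := by
      have h2 : (0:ℝ) < |z| := by rw [← hZdef]; exact hZpos
      exact abs_pos.mp h2
    have hsgn_eq : Real.sign z = sgn := by
      rw [hsgn]
      rcases lt_trichotomy z 0 with h | h | h
      · rw [Real.sign_of_neg h]; simp [h]
      · exact absurd h hzne
      · rw [Real.sign_of_pos h]; simp [not_lt.mpr (le_of_lt h)]
    refine ⟨κ, hκIoo, hκ, ?_, ?_⟩
    · intro κ' hκ'mem heq
      exact hgmono.injOn (mem_Ioi.mpr hκ'mem.1) (mem_Ioi.mpr hκpos) (heq.trans hκ.symm)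
    · intro b hb
      rw [hsgn_eq] at hb ⊢
      have h1 : J₁ (sgn * κ) = G κ := by
        rw [hJG, ← mul_assoc, hs2, one_mul]
      have h2 : sgn * b ≠ κ := by
        intro h
        apply hb
        rw [← h, ← mul_assoc, hs2, one_mul]
      rw [h1, hJG b]
      exact hGmin (sgn * b) h2
end

section
/- Let Φ be a nonzero Bernstein function on (0,∞) with Φ(0+) = 0 and lim_{s→∞} Φ(s)/s = lim_{s→∞} Φ'(s) = 0, with Φ'(0+) < ∞ and Φ''(0+) > −∞, extended to [0,∞) by Φ(0) = 0. Let z ∈ ℝ, λ > 0 and J₁(b) = (1/2)(z − b)² + λΦ(|b|). Suppose λ > −1/Φ''(0+). Then: (i) the equation 1 + λΦ''(s) = 0 has a unique root s* in (0,∞); (ii) if |z| ≤ s* + λΦ'(s*), then b = 0 is a global minimizer of J₁ over ℝ; (iii) if |z| > s* + λΦ'(s*), then the equation b + λΦ'(b) = |z| has exactly one root κ in the interval (s*, |z|), and every local minimizer of J₁ other than 0 equals sgn(z)·κ. -/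
open Set Filter Topology

section aux
variable {Φ : ℝ → ℝ}

lemma iter_smooth (h : ContDiffOn ℝ (⊤ : ℕ∞) Φ (Set.Ioi 0)) (k : ℕ) :
    ContDiffOn ℝ (⊤ : ℕ∞) (iteratedDeriv k Φ) (Set.Ioi 0) := by
  induction k with
  | zero => simpa [iteratedDeriv_zero] using h
  | succ n ih =>
    rw [iteratedDeriv_succ]
    exact ih.deriv_of_isOpen isOpen_Ioi (by simp)

lemma iter_hasDeriv (h : ContDiffOn ℝ (⊤ : ℕ∞) Φ (Set.Ioi 0)) (k : ℕ) {s : ℝ} (hs : s ∈ Set.Ioi (0:ℝ)) :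
    HasDerivAt (iteratedDeriv k Φ) (iteratedDeriv (k+1) Φ s) s := by
  have h1 : ContDiffAt ℝ (⊤ : ℕ∞) (iteratedDeriv k Φ) s :=
    (iter_smooth h k).contDiffAt (isOpen_Ioi.mem_nhds hs)
  have h2 : DifferentiableAt ℝ (iteratedDeriv k Φ) s := h1.differentiableAt (by simp)
  simpa [iteratedDeriv_succ] using h2.hasDerivAt

noncomputable def mFun (Φ : ℝ → ℝ) (j : ℕ) (t : ℝ) : ℝ := (-1)^j * iteratedDeriv (j+1) Φ t

lemma mFun_nonneg (hB : IsBernstein Φ) (j : ℕ) {t : ℝ} (ht : t ∈ Set.Ioi (0:ℝ)) :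
    0 ≤ mFun Φ j t := by
  have := hB.2.2 (j+1) (by omega) t ht
  simpa [mFun] using this

lemma mFun_hasDeriv (hsm : ContDiffOn ℝ (⊤ : ℕ∞) Φ (Set.Ioi 0)) (j : ℕ) {t : ℝ}
    (ht : t ∈ Set.Ioi (0:ℝ)) :
    HasDerivAt (mFun Φ j) (-(mFun Φ (j+1) t)) t := by
  have h := (iter_hasDeriv hsm (j+1) ht).const_mul ((-1:ℝ)^j)
  have he : -(mFun Φ (j+1) t) = (-1:ℝ)^j * iteratedDeriv (j+1+1) Φ t := by
    simp [mFun, pow_succ]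
  rw [he]
  exact h

lemma mFun_contOn (hsm : ContDiffOn ℝ (⊤ : ℕ∞) Φ (Set.Ioi 0)) (j : ℕ) :
    ContinuousOn (mFun Φ j) (Set.Ioi 0) :=
  fun x hx => (mFun_hasDeriv hsm j hx).continuousAt.continuousWithinAt

section helpers
variable {f f' : ℝ → ℝ} {D : Set ℝ}

lemma my_monoOn (hD : Convex ℝ D) (hDsub : D ⊆ Set.Ioi 0)
    (hf : ∀ s ∈ Set.Ioi (0:ℝ), HasDerivAt f (f' s) s)
    (h' : ∀ s ∈ interior D, 0 ≤ f' s) : MonotoneOn f D :=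
  monotoneOn_of_hasDerivWithinAt_nonneg hD
    (fun x hx => (hf x (hDsub hx)).continuousAt.continuousWithinAt)
    (fun x hx => (hf x (hDsub (interior_subset hx))).hasDerivWithinAt) h'

lemma my_antiOn (hD : Convex ℝ D) (hDsub : D ⊆ Set.Ioi 0)
    (hf : ∀ s ∈ Set.Ioi (0:ℝ), HasDerivAt f (f' s) s)
    (h' : ∀ s ∈ interior D, f' s ≤ 0) : AntitoneOn f D := by
  have := monotoneOn_of_hasDerivWithinAt_nonneg (f := fun x => -f x) (f' := fun x => -f' x) hD
    (fun x hx => ((hf x (hDsub hx)).neg).continuousAt.continuousWithinAt)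
    (fun x hx => ((hf x (hDsub (interior_subset hx))).neg).hasDerivWithinAt)
    (fun x hx => by simpa using h' x hx)
  intro x hx y hy hxy
  simpa using this hx hy hxy

lemma my_strictMonoOn (hD : Convex ℝ D) (hDsub : D ⊆ Set.Ioi 0)
    (hf : ∀ s ∈ Set.Ioi (0:ℝ), HasDerivAt f (f' s) s)
    (h' : ∀ s ∈ interior D, 0 < f' s) : StrictMonoOn f D :=
  strictMonoOn_of_hasDerivWithinAt_pos hD
    (fun x hx => (hf x (hDsub hx)).continuousAt.continuousWithinAt)
    (fun x hx => (hf x (hDsub (interior_subset hx))).hasDerivWithinAt) h'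

lemma my_strictAntiOn (hD : Convex ℝ D) (hDsub : D ⊆ Set.Ioi 0)
    (hf : ∀ s ∈ Set.Ioi (0:ℝ), HasDerivAt f (f' s) s)
    (h' : ∀ s ∈ interior D, f' s < 0) : StrictAntiOn f D :=
  strictAntiOn_of_hasDerivWithinAt_neg hD
    (fun x hx => (hf x (hDsub hx)).continuousAt.continuousWithinAt)
    (fun x hx => (hf x (hDsub (interior_subset hx))).hasDerivWithinAt) h'

end helpers

section aux2
variable {Φ : ℝ → ℝ}

lemma mFun_anti (hB : IsBernstein Φ) (j : ℕ) : AntitoneOn (mFun Φ j) (Set.Ioi 0) := by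
  apply my_antiOn (convex_Ioi 0) (subset_refl _) (fun s hs => mFun_hasDeriv hB.1 j hs)
  intro s hs
  rw [interior_Ioi] at hs
  simpa using mFun_nonneg hB (j+1) hs

lemma mFun_vanish {t0 : ℝ} (hv : ∀ t ∈ Set.Ioi t0, deriv Φ t = 0) (j : ℕ) :
    ∀ t ∈ Set.Ioi t0, iteratedDeriv (j+1) Φ t = 0 := by
  induction j with
  | zero => intro t ht; rw [iteratedDeriv_one]; exact hv t ht
  | succ n ih =>
    intro t ht
    rw [iteratedDeriv_succ]
    have he : iteratedDeriv (n+1) Φ =ᶠ[𝓝 t] fun _ => 0 := by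
      filter_upwards [isOpen_Ioi.mem_nhds ht] with y hy using ih y hy
    rw [he.deriv_eq]
    simp

lemma mFun_vanish' {t0 : ℝ} (hv : ∀ t ∈ Set.Ioi t0, deriv Φ t = 0) (j : ℕ)
    {t : ℝ} (ht : t ∈ Set.Ioi t0) : mFun Φ j t = 0 := by
  simp [mFun, mFun_vanish hv j t ht]

end aux2

section chain
variable {Φ : ℝ → ℝ}

lemma chainA (hB : IsBernstein Φ) {b : ℝ} (hb0 : 0 < b)
    (hvb : ∀ j, mFun Φ j b = 0) (n : ℕ) :
    ∀ j, ∀ a, 0 < a → a < b → mFun Φ j a ≤ mFun Φ (j+n) a * (b-a)^n / n.factorial := by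
  induction n with
  | zero => intro j a _ _; simp
  | succ n ih =>
    intro j a ha hab
    have hsm := hB.1
    have hIcc : Set.uIcc a b ⊆ Set.Ioi 0 := by
      rw [Set.uIcc_of_le hab.le]
      exact fun x hx => lt_of_lt_of_le ha hx.1
    have hftc : ∫ t in a..b, -(mFun Φ (j+1) t) = mFun Φ j b - mFun Φ j a := by
      apply intervalIntegral.integral_eq_sub_of_hasDerivAt
      · intro x hx; exact mFun_hasDeriv hsm j (hIcc hx)
      · exact (((mFun_contOn hsm (j+1)).mono hIcc).neg).intervalIntegrable
    have key : mFun Φ j a = ∫ t in a..b, mFun Φ (j+1) t := by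
      rw [hvb j] at hftc
      rw [intervalIntegral.integral_neg] at hftc
      linarith
    have hanti : AntitoneOn (mFun Φ (j+1+n)) (Set.Ioi 0) := mFun_anti hB _
    have hpt : ∀ t ∈ Set.Icc a b,
        mFun Φ (j+1) t ≤ mFun Φ (j+1+n) a * (b-t)^n / n.factorial := by
      rintro t ⟨hta, htb⟩
      have ht0 : (0:ℝ) < t := lt_of_lt_of_le ha hta
      rcases eq_or_lt_of_le htb with rfl | htb'
      · rw [hvb (j+1)]
        have h1 : 0 ≤ mFun Φ (j+1+n) a := mFun_nonneg hB _ ha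
        exact div_nonneg (mul_nonneg h1 (pow_nonneg (by simp) n)) (Nat.cast_nonneg _)
      · calc mFun Φ (j+1) t ≤ mFun Φ (j+1+n) t * (b-t)^n / n.factorial := ih (j+1) t ht0 htb'
          _ ≤ mFun Φ (j+1+n) a * (b-t)^n / n.factorial := by
              have h1 : mFun Φ (j+1+n) t ≤ mFun Φ (j+1+n) a := hanti ha ht0 hta
              have h2 : (0:ℝ) ≤ (b-t)^n := pow_nonneg (by linarith) n
              have hfp : (0:ℝ) < n.factorial := by positivity
              exact div_le_div_of_nonneg_right (mul_le_mul_of_nonneg_right h1 h2) hfp.le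

    have hint : ∫ t in a..b, mFun Φ (j+1) t
        ≤ ∫ t in a..b, mFun Φ (j+1+n) a * (b-t)^n / n.factorial := by
      apply intervalIntegral.integral_mono_on hab.le
      · exact ((mFun_contOn hsm (j+1)).mono hIcc).intervalIntegrable
      · have hcR : Continuous fun u : ℝ => mFun Φ (j+1+n) a * (b-u)^n / (n.factorial:ℝ) := by
          fun_prop
        exact hcR.intervalIntegrable _ _
      · exact hpt
    have h1 : ∫ t in a..b, (b-t)^n = (b-a)^(n+1)/(n+1) := by
      rw [show (fun t => (b - t)^n) = fun t => (fun u => u^n) (b - t) from rfl]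
      rw [intervalIntegral.integral_comp_sub_left (fun u => u^n) b]
      simp [integral_pow]
    have hval : (∫ t in a..b, mFun Φ (j+1+n) a * (b-t)^n / n.factorial)
        = mFun Φ (j+1+n) a * (b-a)^(n+1) / (n+1).factorial := by
      have hfn : (fun t => mFun Φ (j+1+n) a * (b-t)^n / n.factorial)
          = fun t => (mFun Φ (j+1+n) a / n.factorial) * (b-t)^n := by
        funext t; ring
      rw [hfn, intervalIntegral.integral_const_mul, h1]
      have hfs : (((n+1).factorial : ℕ) : ℝ) = ((n:ℝ)+1) * n.factorial := by
        rw [Nat.factorial_succ]; push_cast; ring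
      have hfp : (0:ℝ) < n.factorial := by positivity
      rw [hfs, div_mul_div_comm, mul_comm ((n.factorial:ℝ)) ((n:ℝ)+1)]
    have hje : j + (n+1) = j+1+n := by omega
    rw [hje, key]
    rw [hval] at hint
    exact hint

lemma chainB (hB : IsBernstein Φ) (n : ℕ) :
    ∀ a h : ℝ, 0 < h → 0 < a - n * h → mFun Φ n a ≤ mFun Φ 0 (a - n*h) / h^n := by
  induction n with
  | zero => intro a h _ _; simp
  | succ n ih =>
    intro a h hh ha
    push_cast
    have hnh : (0:ℝ) ≤ (n:ℝ) * h := by positivity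
    have hca : ((n:ℕ)+1:ℝ) * h = (n:ℝ)*h + h := by ring
    have ha' : (0:ℝ) < a - ((n:ℝ)+1) * h := by push_cast at ha; linarith
    have hpos : (0:ℝ) < a - h := by nlinarith
    have hapos : (0:ℝ) < a := by nlinarith
    obtain ⟨ξ, hξ, hslope⟩ := exists_hasDerivAt_eq_slope (mFun Φ n)
      (fun t => -(mFun Φ (n+1) t)) (by linarith : a - h < a)
      (((mFun_contOn hB.1 n).mono (by
        intro x hx
        exact lt_of_lt_of_le hpos hx.1)))
      (fun x hx => mFun_hasDeriv hB.1 n (by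
        simp only [Set.mem_Ioi]
        linarith [hx.1]))
    have hξ0 : (0:ℝ) < ξ := lt_trans hpos hξ.1
    have hslope' : mFun Φ (n+1) ξ = (mFun Φ n (a-h) - mFun Φ n a)/h := by
      have harith : a - (a - h) = h := by ring
      rw [harith] at hslope
      field_simp at hslope ⊢
      linarith
    have h1 : mFun Φ (n+1) ξ ≤ mFun Φ n (a-h) / h := by
      rw [hslope']
      have hnn : 0 ≤ mFun Φ n a := mFun_nonneg hB n hapos
      gcongr
      linarith
    have h2 : mFun Φ (n+1) a ≤ mFun Φ (n+1) ξ := mFun_anti hB (n+1) hξ0 hapos hξ.2.le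
    have h3 : mFun Φ n (a - h) ≤ mFun Φ 0 ((a-h) - n*h) / h^n :=
      ih (a-h) h hh (by push_cast at ha' ⊢; linarith)
    have harg : (a - h) - (n:ℝ)*h = a - ((n:ℕ)+1:ℝ)*h := by push_cast; ring
    calc mFun Φ (n+1) a ≤ mFun Φ n (a-h)/h := h2.trans h1
      _ ≤ (mFun Φ 0 (a - ((n:ℕ)+1:ℝ)*h)/h^n)/h := by rw [← harg]; gcongr
      _ = mFun Φ 0 (a - ((n:ℕ)+1:ℝ)*h)/h^(n+1) := by rw [div_div, pow_succ]

end chain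

section propagate
variable {Φ : ℝ → ℝ}

lemma prop_step (hB : IsBernstein Φ) {t1 a : ℝ} (ht1 : 0 < t1) (ha : 0 < a)
    (hz : ∀ t ∈ Set.Ioi t1, deriv Φ t = 0) (hcl : 6 * t1 < 7 * a) :
    deriv Φ a = 0 := by
  rcases lt_or_ge t1 a with hat | hat
  · exact hz a hat
  have hta : t1 - a < a/6 := by linarith
  obtain ⟨b, hb1, hb2⟩ : ∃ b, t1 < b ∧ b - a < a/6 :=
    ⟨(t1 + (a + a/6))/2, by constructor <;> [skip; skip] <;> linarith⟩
  have hab : a < b := lt_of_le_of_lt hat hb1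
  have hb0 : 0 < b := lt_trans ha hab
  have hvb : ∀ j, mFun Φ j b = 0 := fun j => mFun_vanish' hz j hb1
  obtain ⟨r, hrdef⟩ : ∃ r, r = 2*(b-a)/a * Real.exp 1 := ⟨_, rfl⟩
  have hba0 : 0 < b - a := by linarith
  have hr0 : 0 ≤ r := by rw [hrdef]; positivity
  have he3 : Real.exp 1 < 3 := by
    have := Real.exp_one_lt_d9
    linarith
  have hr1 : r < 1 := by
    rw [hrdef, div_mul_eq_mul_div, div_lt_one ha]
    nlinarith [Real.exp_pos 1]
  have ha2 : (0:ℝ) < a/2 := by positivity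
  have hm2 : 0 ≤ mFun Φ 0 (a/2) := mFun_nonneg hB 0 ha2
  have key : ∀ n : ℕ, 1 ≤ n → mFun Φ 0 a ≤ mFun Φ 0 (a/2) * r^n := by
    intro n hn
    have hn0 : (0:ℝ) < n := by exact_mod_cast hn
    obtain ⟨h, hhdef⟩ : ∃ h : ℝ, h = a/(2*n) := ⟨_, rfl⟩
    have hh : 0 < h := by rw [hhdef]; positivity
    have hnh : a - n*h = a/2 := by
      rw [hhdef]; field_simp; ring
    have hA := chainA hB hb0 hvb n 0 a ha hab
    rw [zero_add] at hA
    have hBd := chainB hB n a h hh (by rw [hnh]; positivity)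
    rw [hnh] at hBd
    have hfp : (0:ℝ) < n.factorial := by positivity
    have h2 : mFun Φ 0 a ≤ (mFun Φ 0 (a/2) / h^n) * (b-a)^n / n.factorial := by
      refine hA.trans ?_
      have hbn : (0:ℝ) ≤ (b-a)^n := by positivity
      exact div_le_div_of_nonneg_right (mul_le_mul_of_nonneg_right hBd hbn) hfp.le
    have hhe : (mFun Φ 0 (a/2) / h^n) * (b-a)^n / n.factorial
        = mFun Φ 0 (a/2) * (2*(b-a)/a)^n * ((n:ℝ)^n / n.factorial) := by
      rw [hhdef, div_pow, div_pow, mul_pow, mul_pow]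
      field_simp
    have hexp : (n:ℝ)^n / n.factorial ≤ Real.exp 1 ^ n := by
      have h1 := Real.pow_div_factorial_le_exp (x := (n:ℝ)) (Nat.cast_nonneg n) n
      have h2 : Real.exp (n:ℝ) = Real.exp 1 ^ n := by
        rw [show ((n:ℝ)) = (n:ℝ)*1 by ring, Real.exp_nat_mul]
      rw [← h2]
      exact h1
    calc mFun Φ 0 a ≤ (mFun Φ 0 (a/2) / h^n) * (b-a)^n / n.factorial := h2
      _ = mFun Φ 0 (a/2) * (2*(b-a)/a)^n * ((n:ℝ)^n / n.factorial) := hhe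
      _ ≤ mFun Φ 0 (a/2) * (2*(b-a)/a)^n * Real.exp 1 ^ n := by
          have hnn : 0 ≤ mFun Φ 0 (a/2) * (2*(b-a)/a)^n := mul_nonneg hm2 (by positivity)
          exact mul_le_mul_of_nonneg_left hexp hnn
      _ = mFun Φ 0 (a/2) * r^n := by rw [hrdef, mul_pow]; ring
  have hlim : Filter.Tendsto (fun n : ℕ => mFun Φ 0 (a/2) * r^n) atTop (𝓝 0) := by
    have h0 := tendsto_pow_atTop_nhds_zero_of_lt_one hr0 hr1
    simpa using h0.const_mul (mFun Φ 0 (a/2))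
  have hle : mFun Φ 0 a ≤ 0 :=
    ge_of_tendsto hlim (eventually_atTop.2 ⟨1, fun n hn => key n hn⟩)
  have h0' : 0 ≤ mFun Φ 0 a := mFun_nonneg hB 0 ha
  have hz0 : mFun Φ 0 a = 0 := le_antisymm hle h0'
  simpa [mFun, iteratedDeriv_one] using hz0

lemma cm_zero (hB : IsBernstein Φ) {t0 : ℝ} (ht0 : 0 < t0) (hz0 : deriv Φ t0 = 0)
    (hanti : AntitoneOn (deriv Φ) (Set.Ioi 0)) :
    ∀ a ∈ Set.Ioi (0:ℝ), deriv Φ a = 0 := by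
  have hnn : ∀ t ∈ Set.Ioi (0:ℝ), 0 ≤ deriv Φ t := by
    intro t ht
    have := hB.2.2 1 le_rfl t ht
    simpa [iteratedDeriv_one] using this
  have base : ∀ t ∈ Set.Ioi t0, deriv Φ t = 0 := by
    intro t ht
    have h1 : deriv Φ t ≤ deriv Φ t0 := hanti ht0 (lt_trans ht0 ht) (le_of_lt ht)
    have h2 := hnn t (lt_trans ht0 ht)
    rw [hz0] at h1
    linarith
  have Q : ∀ n : ℕ, ∀ a : ℝ, 0 < a → t0 * (6/7)^n < a → deriv Φ a = 0 := by
    intro n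
    induction n with
    | zero => intro a ha h; exact base a (by simpa using h)
    | succ n ih =>
      intro a ha h
      rcases lt_or_ge (t0 * (6/7)^n) a with h' | h'
      · exact ih a ha h'
      · have hs : (0:ℝ) < t0 * (6/7)^n := by positivity
        have hzs : ∀ t ∈ Set.Ioi (t0 * (6/7)^n), deriv Φ t = 0 :=
          fun t ht => ih t (lt_trans hs ht) ht
        apply prop_step hB hs ha hzs
        have he : t0 * (6/7:ℝ)^(n+1) = (t0 * (6/7)^n) * (6/7) := by rw [pow_succ]; ring
        rw [he] at h
        linarith
  intro a ha
  obtain ⟨n, hn⟩ := exists_pow_lt_of_lt_one (div_pos ha ht0)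
    (by norm_num : (6/7:ℝ) < 1)
  refine Q n a ha ?_
  calc t0 * (6/7)^n < t0 * (a / t0) := by
        have := (mul_lt_mul_iff_right₀ ht0).mpr hn
        exact this
    _ = a := by field_simp

end propagate

section flat
variable {Φ : ℝ → ℝ}

lemma const_of_deriv_zero_on {f f' : ℝ → ℝ} {u : ℝ} (hu : 0 ≤ u)
    (hf : ∀ s ∈ Set.Ioi (0:ℝ), HasDerivAt f (f' s) s)
    (hf' : ∀ s ∈ Set.Ioi u, f' s = 0) {x y : ℝ} (hx : u < x) (hxy : x ≤ y) : f x = f y := by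
  rcases eq_or_lt_of_le hxy with rfl | hlt
  · rfl
  have hmem : ∀ t ∈ Set.Icc x y, t ∈ Set.Ioi (0:ℝ) := by
    intro t ht
    simp only [Set.mem_Ioi]
    linarith [ht.1]
  obtain ⟨ξ, hξ, hsl⟩ := exists_hasDerivAt_eq_slope f f' hlt
    (fun t ht => (hf t (hmem t ht)).continuousAt.continuousWithinAt)
    (fun t ht => hf t (hmem t (Set.Ioo_subset_Icc_self ht)))
  rw [hf' ξ (by simp only [Set.mem_Ioi]; linarith [hξ.1])] at hsl
  rw [eq_comm, div_eq_zero_iff] at hsl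
  rcases hsl with h | h
  · linarith
  · linarith

lemma D2_flat_false (hB : IsBernstein Φ) {x W : ℝ} (hx : 0 < x) (hW : W < 0)
    (hflat : ∀ t, x ≤ t → deriv (deriv Φ) t = W) : False := by
  have hsm := hB.1
  have hD1nn : ∀ s ∈ Set.Ioi (0:ℝ), 0 ≤ deriv Φ s := fun s hs => by
    simpa [iteratedDeriv_one] using hB.2.2 1 le_rfl s hs
  have hD2At : ∀ s ∈ Set.Ioi (0:ℝ), HasDerivAt (deriv Φ) (deriv (deriv Φ) s) s := by
    intro s hs
    have h := iter_hasDeriv hsm 1 hs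
    have h2 : iteratedDeriv (1+1) Φ = deriv (deriv Φ) := by
      rw [iteratedDeriv_succ, iteratedDeriv_one]
    rw [h2, iteratedDeriv_one] at h
    exact h
  have hDx : 0 ≤ deriv Φ x := hD1nn x hx
  obtain ⟨X, hXdef⟩ : ∃ X : ℝ, X = x + (deriv Φ x + 1)/(-W) := ⟨_, rfl⟩
  have hq : 0 < (deriv Φ x + 1)/(-W) := div_pos (by linarith) (by linarith)
  have hxX : x < X := by rw [hXdef]; linarith
  have hmem : ∀ t ∈ Set.Icc x X, t ∈ Set.Ioi (0:ℝ) := by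
    intro t ht
    simp only [Set.mem_Ioi]
    linarith [ht.1]
  obtain ⟨ξ, hξ, hsl⟩ := exists_hasDerivAt_eq_slope (deriv Φ) (deriv (deriv Φ)) hxX
    (fun t ht => (hD2At t (hmem t ht)).continuousAt.continuousWithinAt)
    (fun t ht => hD2At t (hmem t (Set.Ioo_subset_Icc_self ht)))
  rw [hflat ξ hξ.1.le] at hsl
  have hXx : X - x = (deriv Φ x + 1)/(-W) := by rw [hXdef]; ring
  have hne : X - x ≠ 0 := by linarith
  rw [eq_div_iff hne] at hsl
  have hDX : deriv Φ X = -1 := by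
    have hW0 : W ≠ 0 := ne_of_lt hW
    rw [hXx] at hsl
    have hkey : W * ((deriv Φ x + 1) / -W) = -(deriv Φ x + 1) := by
      rw [div_neg, mul_neg, ← mul_div_assoc, mul_div_cancel_left₀ _ hW0]
    rw [hkey] at hsl
    linarith
  have := hD1nn X (lt_trans hx hxX)
  linarith

lemma D2_two_roots_false (hB : IsBernstein Φ) {W u v : ℝ} (hW : W < 0) (hu : 0 < u)
    (huv : u < v) (h2u : deriv (deriv Φ) u = W) (h2v : deriv (deriv Φ) v = W) : False := by
  have hsm := hB.1
  have hEq2 : iteratedDeriv 2 Φ = deriv (deriv Φ) := by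
    rw [iteratedDeriv_succ, iteratedDeriv_one]
  have hD3At : ∀ s ∈ Set.Ioi (0:ℝ), HasDerivAt (deriv (deriv Φ)) (iteratedDeriv 3 Φ s) s := by
    intro s hs
    have h := iter_hasDeriv hsm 2 hs
    rw [hEq2] at h
    exact h
  have hD4At : ∀ s ∈ Set.Ioi (0:ℝ), HasDerivAt (iteratedDeriv 3 Φ) (iteratedDeriv 4 Φ s) s :=
    fun s hs => iter_hasDeriv hsm 3 hs
  have hD3nn : ∀ s ∈ Set.Ioi (0:ℝ), 0 ≤ iteratedDeriv 3 Φ s := fun s hs => by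
    have := hB.2.2 3 (by norm_num) s hs
    norm_num at this
    exact this
  have hD4np : ∀ s ∈ Set.Ioi (0:ℝ), iteratedDeriv 4 Φ s ≤ 0 := fun s hs => by
    have := hB.2.2 4 (by norm_num) s hs
    norm_num at this
    linarith
  have hD2mono : MonotoneOn (deriv (deriv Φ)) (Set.Ioi 0) :=
    my_monoOn (convex_Ioi 0) subset_rfl hD3At
      (fun s hs => hD3nn s (by rwa [interior_Ioi] at hs))
  have hD3anti : AntitoneOn (iteratedDeriv 3 Φ) (Set.Ioi 0) :=
    my_antiOn (convex_Ioi 0) subset_rfl hD4At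
      (fun s hs => hD4np s (by rwa [interior_Ioi] at hs))
  have hv0 : (0:ℝ) < v := lt_trans hu huv
  have hflatuv : ∀ t ∈ Set.Icc u v, deriv (deriv Φ) t = W := by
    rintro t ⟨h1, h2⟩
    have ht0 : (0:ℝ) < t := lt_of_lt_of_le hu h1
    have ha := hD2mono (Set.mem_Ioi.mpr hu) (Set.mem_Ioi.mpr ht0) h1
    have hb := hD2mono (Set.mem_Ioi.mpr ht0) (Set.mem_Ioi.mpr hv0) h2
    rw [h2u] at ha; rw [h2v] at hb
    linarith
  obtain ⟨tm, htm1, htm2⟩ : ∃ tm, u < tm ∧ tm < v := ⟨(u+v)/2, by linarith, by linarith⟩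
  have htm0 : (0:ℝ) < tm := lt_trans hu htm1
  have hD3tm : iteratedDeriv 3 Φ tm = 0 := by
    have hev : deriv (deriv Φ) =ᶠ[𝓝 tm] fun _ => W := by
      filter_upwards [isOpen_Ioo.mem_nhds (⟨htm1, htm2⟩ : tm ∈ Set.Ioo u v)] with y hy
      exact hflatuv y (Set.Ioo_subset_Icc_self hy)
    have h1 : deriv (deriv (deriv Φ)) tm = 0 := by rw [hev.deriv_eq]; simp
    have h2 := (hD3At tm (Set.mem_Ioi.mpr htm0)).deriv
    rw [← h2, h1]
  have hD3zero : ∀ s ∈ Set.Ioi tm, iteratedDeriv 3 Φ s = 0 := by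
    intro s hs
    have hs0 : (0:ℝ) < s := lt_trans htm0 hs
    have h1 := hD3anti (Set.mem_Ioi.mpr htm0) (Set.mem_Ioi.mpr hs0) (le_of_lt hs)
    have h2 := hD3nn s (Set.mem_Ioi.mpr hs0)
    rw [hD3tm] at h1
    linarith
  obtain ⟨x0, hx01, hx02⟩ : ∃ x0, tm < x0 ∧ x0 < v := ⟨(tm+v)/2, by linarith, by linarith⟩
  have hx00 : (0:ℝ) < x0 := lt_trans htm0 hx01
  have hx0W : deriv (deriv Φ) x0 = W := hflatuv x0 ⟨by linarith, by linarith⟩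
  apply D2_flat_false hB hx00 hW
  intro t ht
  have := const_of_deriv_zero_on (le_of_lt htm0) hD3At hD3zero hx01 ht
  rw [← this, hx0W]

end flat

set_option maxHeartbeats 4000000 in
theorem stmt_8 (Φ : ℝ → ℝ) (hB : IsBernstein Φ)
    (hnz : ∃ s, 0 < s ∧ 0 < Φ s)
    (h0 : Filter.Tendsto Φ (𝓝[>] (0:ℝ)) (𝓝 0))
    (hΦ0 : Φ 0 = 0)
    (hlin : Filter.Tendsto (fun s => Φ s / s) Filter.atTop (𝓝 0))
    (hdtop : Filter.Tendsto (deriv Φ) Filter.atTop (𝓝 0))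
    (d : ℝ) (hd : Filter.Tendsto (deriv Φ) (𝓝[>] (0:ℝ)) (𝓝 d))
    (c : ℝ) (hc : Filter.Tendsto (deriv (deriv Φ)) (𝓝[>] (0:ℝ)) (𝓝 c))
    (z lam : ℝ) (hlam : 0 < lam)
    (J₁ : ℝ → ℝ) (hJ : J₁ = fun b => (1/2) * (z - b)^2 + lam * Φ |b|)
    (hcase : -(1/c) < lam) :
    ∃ sstar ∈ Set.Ioi (0:ℝ),
      (1 + lam * deriv (deriv Φ) sstar = 0) ∧
      (∀ s ∈ Set.Ioi (0:ℝ), 1 + lam * deriv (deriv Φ) s = 0 → s = sstar) ∧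
      (|z| ≤ sstar + lam * deriv Φ sstar → ∀ b : ℝ, J₁ 0 ≤ J₁ b) ∧
      (sstar + lam * deriv Φ sstar < |z| →
        ∃ κ ∈ Set.Ioo sstar |z|,
          (κ + lam * deriv Φ κ = |z|) ∧
          (∀ κ' ∈ Set.Ioo sstar |z|, κ' + lam * deriv Φ κ' = |z| → κ' = κ) ∧
          (∀ b : ℝ, IsLocalMin J₁ b → b ≠ 0 → b = Real.sign z * κ)) := by
  obtain ⟨hsm, hpos, hsign⟩ := hB
  have hB' : IsBernstein Φ := ⟨hsm, hpos, hsign⟩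
  have hEq2 : iteratedDeriv 2 Φ = deriv (deriv Φ) := by
    rw [iteratedDeriv_succ, iteratedDeriv_one]
  have hD1At : ∀ s ∈ Set.Ioi (0:ℝ), HasDerivAt Φ (deriv Φ s) s := by
    intro s hs
    have h := iter_hasDeriv hsm 0 hs
    rwa [iteratedDeriv_zero, iteratedDeriv_one] at h
  have hD2At : ∀ s ∈ Set.Ioi (0:ℝ), HasDerivAt (deriv Φ) (deriv (deriv Φ) s) s := by
    intro s hs
    have h := iter_hasDeriv hsm 1 hs
    rwa [iteratedDeriv_one, hEq2] at h
  have hD3At : ∀ s ∈ Set.Ioi (0:ℝ), HasDerivAt (deriv (deriv Φ)) (iteratedDeriv 3 Φ s) s := by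
    intro s hs
    have h := iter_hasDeriv hsm 2 hs
    rwa [hEq2] at h
  have hD1nn : ∀ s ∈ Set.Ioi (0:ℝ), 0 ≤ deriv Φ s := fun s hs => by
    simpa [iteratedDeriv_one] using hsign 1 le_rfl s hs
  have hD2np : ∀ s ∈ Set.Ioi (0:ℝ), deriv (deriv Φ) s ≤ 0 := fun s hs => by
    have h := hsign 2 (by norm_num) s hs
    rw [hEq2] at h
    norm_num at h
    linarith
  have hD3nn : ∀ s ∈ Set.Ioi (0:ℝ), 0 ≤ iteratedDeriv 3 Φ s := fun s hs => by
    have h := hsign 3 (by norm_num) s hs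
    norm_num at h
    exact h
  have hD2mono : MonotoneOn (deriv (deriv Φ)) (Set.Ioi 0) :=
    my_monoOn (convex_Ioi 0) subset_rfl hD3At
      (fun s hs => hD3nn s (by rwa [interior_Ioi] at hs))
  have hD1anti : AntitoneOn (deriv Φ) (Set.Ioi 0) :=
    my_antiOn (convex_Ioi 0) subset_rfl hD2At
      (fun s hs => hD2np s (by rwa [interior_Ioi] at hs))
  -- c ≤ D2 everywhere on (0,∞)
  have hcle : ∀ s ∈ Set.Ioi (0:ℝ), c ≤ deriv (deriv Φ) s := by
    intro s hs
    refine le_of_tendsto hc ?_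
    filter_upwards [Ioo_mem_nhdsGT (Set.mem_Ioi.mp hs)] with t ht
    exact hD2mono (Set.mem_Ioi.mpr ht.1) hs ht.2.le
  -- c < 0
  have hc0 : c < 0 := by
    rcases lt_or_ge c 0 with h | h
    · exact h
    exfalso
    have hD2zero : ∀ s ∈ Set.Ioi (0:ℝ), deriv (deriv Φ) s = 0 := fun s hs =>
      le_antisymm (hD2np s hs) (le_trans h (hcle s hs))
    have hconst : ∀ x, 0 < x → ∀ y, x ≤ y → deriv Φ x = deriv Φ y := by
      intro x hx y hxy
      exact const_of_deriv_zero_on le_rfl hD2At (fun s hs => hD2zero s hs) hx hxy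
    have h1 : deriv Φ 1 = 0 := by
      have hev : ∀ᶠ y in Filter.atTop, deriv Φ y = deriv Φ 1 := by
        filter_upwards [Filter.eventually_ge_atTop (1:ℝ)] with y hy
        exact (hconst 1 one_pos y hy).symm
      exact tendsto_nhds_unique ((Filter.tendsto_congr' hev).mpr tendsto_const_nhds) hdtop
    have hD1zero : ∀ s, 0 < s → deriv Φ s = 0 := by
      intro s hs
      rcases le_or_gt s 1 with h' | h'
      · rw [hconst s hs 1 h']; exact h1
      · rw [← hconst 1 one_pos s h'.le]; exact h1
    have hΦconst : ∀ x, 0 < x → ∀ y, x ≤ y → Φ x = Φ y :=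
      fun x hx y hxy => const_of_deriv_zero_on le_rfl hD1At
        (fun s hs => hD1zero s (Set.mem_Ioi.mp hs)) hx hxy
    obtain ⟨s1, hs1, hΦs1⟩ := hnz
    have hev : ∀ᶠ t in 𝓝[>] (0:ℝ), Φ t = Φ s1 := by
      filter_upwards [Ioo_mem_nhdsGT hs1] with t ht
      exact hΦconst t ht.1 s1 ht.2.le
    have hlim : Filter.Tendsto Φ (𝓝[>] (0:ℝ)) (𝓝 (Φ s1)) :=
      (Filter.tendsto_congr' hev).mpr tendsto_const_nhds
    have := tendsto_nhds_unique hlim h0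
    linarith
  have h1lc : lam * c < -1 := by
    have h1 : -(1/c) * c = -1 := by
      rw [neg_mul, one_div, inv_mul_cancel₀ (ne_of_lt hc0)]
    have h2 : lam * c < -(1/c) * c := by
      exact mul_lt_mul_of_neg_right hcase hc0
    rw [h1] at h2
    exact h2
  -- existence of sstar
  have hex : ∃ sstar : ℝ, 0 < sstar ∧ 1 + lam * deriv (deriv Φ) sstar = 0 := by
    have hclam : c < -(1/lam) := by
      have h2 : -(1/lam) = (-1)/lam := by ring
      rw [h2, lt_div_iff₀ hlam]
      linarith [mul_comm lam c, h1lc]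
    have hevlt : ∀ᶠ t in 𝓝[>] (0:ℝ), deriv (deriv Φ) t < -(1/lam) :=
      hc.eventually (eventually_lt_nhds hclam)
    have hevmem : ∀ᶠ t in 𝓝[>] (0:ℝ), t ∈ Set.Ioi (0:ℝ) := self_mem_nhdsWithin
    obtain ⟨a, ha1, ha2⟩ := (hevlt.and hevmem).exists
    have ha0 : (0:ℝ) < a := Set.mem_Ioi.mp ha2
    obtain ⟨b, hbdef⟩ : ∃ b : ℝ, b = a + lam * deriv Φ a + 1 := ⟨_, rfl⟩
    have hDa := hD1nn a ha2
    have hab : a < b := by rw [hbdef]; nlinarith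
    have hmemI : ∀ t ∈ Set.Icc a b, t ∈ Set.Ioi (0:ℝ) := by
      intro t ht
      simp only [Set.mem_Ioi]
      linarith [ht.1]
    obtain ⟨ξ, hξ, hsl⟩ := exists_hasDerivAt_eq_slope (deriv Φ) (deriv (deriv Φ)) hab
      (fun t ht => (hD2At t (hmemI t ht)).continuousAt.continuousWithinAt)
      (fun t ht => hD2At t (hmemI t (Set.Ioo_subset_Icc_self ht)))
    have hξ0 : (0:ℝ) < ξ := lt_trans ha0 hξ.1
    have hslgt : -(1/lam) < deriv (deriv Φ) ξ := by
      rw [hsl]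
      have hDb := hD1nn b (Set.mem_Ioi.mpr (lt_trans ha0 hab))
      have hba : b - a = lam * deriv Φ a + 1 := by rw [hbdef]; ring
      rw [lt_div_iff₀ (by linarith : (0:ℝ) < b - a), hba]
      have hkey : -(1/lam) * (lam * deriv Φ a + 1) = -(deriv Φ a) - 1/lam := by
        field_simp
        ring
      rw [hkey]
      have h1l : 0 < 1/lam := by positivity
      linarith
    have hll : lam * (-(1/lam)) = -1 := by field_simp
    have hga : 1 + lam * deriv (deriv Φ) a < 0 := by
      have hm := mul_lt_mul_of_pos_left ha1 hlam
      rw [hll] at hm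
      linarith
    have hgξ : 0 < 1 + lam * deriv (deriv Φ) ξ := by
      have hm := mul_lt_mul_of_pos_left hslgt hlam
      rw [hll] at hm
      linarith
    have hcontg : ContinuousOn (fun t => 1 + lam * deriv (deriv Φ) t) (Set.Icc a ξ) := by
      intro t ht
      have ht0 : t ∈ Set.Ioi (0:ℝ) := Set.mem_Ioi.mpr (lt_of_lt_of_le ha0 ht.1)
      exact (continuousAt_const.add
        (continuousAt_const.mul (hD3At t ht0).continuousAt)).continuousWithinAt
    have h0mem : (0:ℝ) ∈ Set.Icc (1 + lam * deriv (deriv Φ) a) (1 + lam * deriv (deriv Φ) ξ) :=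
      ⟨hga.le, hgξ.le⟩
    obtain ⟨sstar, hsmem, hseq⟩ := intermediate_value_Icc hξ.1.le hcontg h0mem
    exact ⟨sstar, lt_of_lt_of_le ha0 hsmem.1, hseq⟩
  obtain ⟨sstar, hs0, hroot⟩ := hex
  have hD2star : deriv (deriv Φ) sstar = -(1/lam) := by
    field_simp
    linarith
  -- uniqueness
  have huniq : ∀ s ∈ Set.Ioi (0:ℝ), 1 + lam * deriv (deriv Φ) s = 0 → s = sstar := by
    intro s hs hroot'
    by_contra hne
    have hD2s : deriv (deriv Φ) s = -(1/lam) := by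
      field_simp
      linarith
    have hWneg : -(1/lam) < 0 := neg_lt_zero.mpr (by positivity)
    rcases lt_or_gt_of_ne hne with h | h
    · exact D2_two_roots_false hB' hWneg (Set.mem_Ioi.mp hs) h hD2s hD2star
    · exact D2_two_roots_false hB' hWneg hs0 h hD2star hD2s
  -- sign of g off sstar
  have hgneg : ∀ s ∈ Set.Ioi (0:ℝ), s < sstar → 1 + lam * deriv (deriv Φ) s < 0 := by
    intro s hs hlt
    have h1 := hD2mono hs (Set.mem_Ioi.mpr hs0) hlt.le
    have h2 : 1 + lam * deriv (deriv Φ) s ≤ 0 := by nlinarith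
    rcases h2.lt_or_eq with h | h
    · exact h
    · exact absurd (huniq s hs h) (ne_of_lt hlt)
  have hgpos : ∀ s ∈ Set.Ioi (0:ℝ), sstar < s → 0 < 1 + lam * deriv (deriv Φ) s := by
    intro s hs hlt
    have h1 := hD2mono (Set.mem_Ioi.mpr hs0) hs hlt.le
    have h2 : 0 ≤ 1 + lam * deriv (deriv Φ) s := by nlinarith
    rcases h2.lt_or_eq with h | h
    · exact h
    · exact absurd (huniq s hs h.symm) (ne_of_gt hlt)
  -- rho function
  have hρAt : ∀ s ∈ Set.Ioi (0:ℝ), HasDerivAt (fun t => t + lam * deriv Φ t)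
      (1 + lam * deriv (deriv Φ) s) s := by
    intro s hs
    exact (hasDerivAt_id s).add (((hD2At s hs)).const_mul lam)
  have hρmin : ∀ t ∈ Set.Ioi (0:ℝ), sstar + lam * deriv Φ sstar ≤ t + lam * deriv Φ t := by
    have hmono : MonotoneOn (fun t => t + lam * deriv Φ t) (Set.Ici sstar) :=
      my_monoOn (convex_Ici sstar) (fun t ht => Set.mem_Ioi.mpr (lt_of_lt_of_le hs0 ht)) hρAt
        (fun t ht => by
          rw [interior_Ici] at ht
          exact (hgpos t (Set.mem_Ioi.mpr (lt_trans hs0 ht)) ht).le)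
    have hanti : AntitoneOn (fun t => t + lam * deriv Φ t) (Set.Ioc 0 sstar) :=
      my_antiOn (convex_Ioc 0 sstar) (fun t ht => Set.mem_Ioi.mpr ht.1) hρAt
        (fun t ht => by
          rw [interior_Ioc] at ht
          exact (hgneg t (Set.mem_Ioi.mpr ht.1) ht.2).le)
    intro t ht
    rcases le_or_gt t sstar with h | h
    · exact hanti (Set.mem_Ioc.mpr ⟨Set.mem_Ioi.mp ht, h⟩) (Set.mem_Ioc.mpr ⟨hs0, le_rfl⟩) h
    · exact hmono (Set.mem_Ici.mpr le_rfl) (Set.mem_Ici.mpr h.le) h.le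
  have hρstrict : StrictMonoOn (fun t => t + lam * deriv Φ t) (Set.Ici sstar) := by
    apply my_strictMonoOn (convex_Ici sstar) (fun t ht => Set.mem_Ioi.mpr (lt_of_lt_of_le hs0 ht)) hρAt
    intro t ht
    rw [interior_Ici] at ht
    exact hgpos t (Set.mem_Ioi.mpr (lt_trans hs0 ht)) ht
  have hρantistrict : StrictAntiOn (fun t => t + lam * deriv Φ t) (Set.Ioc 0 sstar) := by
    apply my_strictAntiOn (convex_Ioc 0 sstar) (fun t ht => Set.mem_Ioi.mpr ht.1) hρAt
    intro t ht
    rw [interior_Ioc] at ht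
    exact hgneg t (Set.mem_Ioi.mpr ht.1) ht.2
  have hTpos : 0 < sstar + lam * deriv Φ sstar := by
    have := hD1nn sstar (Set.mem_Ioi.mpr hs0)
    nlinarith
  refine ⟨sstar, Set.mem_Ioi.mpr hs0, hroot, huniq, ?_, ?_⟩
  · -- part (ii)
    intro hzle b
    have hΦcont : ContinuousOn Φ (Set.Ici 0) := by
      intro x hx
      rcases eq_or_lt_of_le (Set.mem_Ici.mp hx) with h | h
      · rw [← h]
        have hset : Set.Ici (0:ℝ) = insert 0 (Set.Ioi 0) := by
          rw [Set.Ioi_insert]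
        rw [ContinuousWithinAt, hset, nhdsWithin_insert, hΦ0]
        rw [Filter.tendsto_sup]
        constructor
        · simpa [hΦ0] using tendsto_pure_nhds Φ 0
        · exact h0
      · exact (hD1At x (Set.mem_Ioi.mpr h)).continuousAt.continuousWithinAt
    have hfunAt : ∀ t ∈ Set.Ioi (0:ℝ),
        HasDerivAt (fun t => t^2/2 - |z| * t + lam * Φ t) (t - |z| + lam * deriv Φ t) t := by
      intro t ht
      have hp : HasDerivAt (fun t : ℝ => t^2/2 - |z| * t) (t - |z|) t := by
        have h2 : HasDerivAt (fun t : ℝ => t^2) (2*t) t := by simpa using hasDerivAt_pow 2 t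
        have h3 := (h2.div_const 2).sub ((hasDerivAt_id t).const_mul |z|)
        convert h3 using 1
        all_goals first | rfl | ring
      exact hp.add ((hD1At t ht).const_mul lam)
    have hfun_mono : MonotoneOn (fun t => t^2/2 - |z| * t + lam * Φ t) (Set.Ici 0) := by
      refine monotoneOn_of_hasDerivWithinAt_nonneg
        (f' := fun t => t - |z| + lam * deriv Φ t) (convex_Ici 0) ?_ ?_ ?_
      · apply ContinuousOn.add
        · exact (((continuous_id.pow 2).div_const 2).sub
            (continuous_const.mul continuous_id)).continuousOn
        · exact continuousOn_const.mul hΦcont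
      · intro t ht
        rw [interior_Ici] at ht
        exact (hfunAt t ht).hasDerivWithinAt
      · intro t ht
        rw [interior_Ici] at ht
        have h9 := hρmin t ht
        show 0 ≤ t - |z| + lam * deriv Φ t
        linarith [hzle, h9]
    have hge : ∀ t : ℝ, 0 ≤ t → 0 ≤ t^2/2 - |z| * t + lam * Φ t := by
      intro t ht
      have h1 := hfun_mono (Set.mem_Ici.mpr le_rfl) (Set.mem_Ici.mpr ht) ht
      simp only [hΦ0] at h1
      norm_num at h1
      exact h1
    have hb := hge |b| (abs_nonneg b)
    have hzb : z * b ≤ |z| * |b| := by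
      calc z * b ≤ |z * b| := le_abs_self _
        _ = |z| * |b| := abs_mul z b
    rw [hJ]
    simp only [abs_zero, hΦ0, mul_zero, add_zero, sub_zero]
    nlinarith [hb, hzb, sq_abs b]
  · -- part (iii)
    intro hzgt
    have hzabs : 0 < |z| := lt_trans hTpos hzgt
    have hzne : z ≠ 0 := by
      intro h
      rw [h, abs_zero] at hzabs
      exact lt_irrefl 0 hzabs
    have hD1pos : ∀ t ∈ Set.Ioi (0:ℝ), 0 < deriv Φ t := by
      intro t ht
      rcases (hD1nn t ht).lt_or_eq with h | h
      · exact h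
      exfalso
      have hall := cm_zero hB' (Set.mem_Ioi.mp ht) h.symm hD1anti
      have hev : deriv Φ =ᶠ[𝓝 sstar] fun _ => 0 := by
        filter_upwards [isOpen_Ioi.mem_nhds (Set.mem_Ioi.mpr hs0)] with y hy using hall y hy
      have h2 : deriv (deriv Φ) sstar = 0 := by rw [hev.deriv_eq]; simp
      rw [h2] at hroot
      simp at hroot
    have hρcont : ContinuousOn (fun t => t + lam * deriv Φ t) (Set.Icc sstar |z|) := by
      intro t ht
      have ht0 : t ∈ Set.Ioi (0:ℝ) := Set.mem_Ioi.mpr (lt_of_lt_of_le hs0 ht.1)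
      exact (hρAt t ht0).continuousAt.continuousWithinAt
    have hρz : |z| < |z| + lam * deriv Φ |z| := by
      have := hD1pos |z| (Set.mem_Ioi.mpr hzabs)
      nlinarith
    have hsz : sstar < |z| := by
      have := hD1nn sstar (Set.mem_Ioi.mpr hs0)
      nlinarith
    obtain ⟨κ, hκmem, hκeq0⟩ := intermediate_value_Ioo hsz.le hρcont ⟨hzgt, hρz⟩
    have hκeq : κ + lam * deriv Φ κ = |z| := hκeq0
    refine ⟨κ, hκmem, hκeq, ?_, ?_⟩
    · intro κ' hκ'mem hκ'eq
      have h1 : κ' ∈ Set.Ici sstar := le_of_lt hκ'mem.1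
      have h2 : κ ∈ Set.Ici sstar := le_of_lt hκmem.1
      rcases lt_trichotomy κ' κ with h | h | h
      · have h3 := hρstrict h1 h2 h
        simp only [] at h3
        rw [hκeq, hκ'eq] at h3
        exact absurd h3 (lt_irrefl _)
      · exact h
      · have h3 := hρstrict h2 h1 h
        simp only [] at h3
        rw [hκeq, hκ'eq] at h3
        exact absurd h3 (lt_irrefl _)
    · intro b hbmin hbne
      obtain ⟨s, hsdef⟩ : ∃ s : ℝ, s = Real.sign z := ⟨_, rfl⟩
      have hs2 : s * s = 1 := by
        rcases Real.sign_apply_eq_of_ne_zero z hzne with h | h <;> rw [hsdef, h] <;> norm_num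
      have hsabs : |s| = 1 := by
        rcases Real.sign_apply_eq_of_ne_zero z hzne with h | h <;> rw [hsdef, h] <;> norm_num
      have hsz' : s * |z| = z := by
        rcases lt_or_gt_of_ne hzne with h | h
        · rw [hsdef, Real.sign_of_neg h, abs_of_neg h]; ring
        · rw [hsdef, Real.sign_of_pos h, abs_of_pos h]; ring
      obtain ⟨G, hGdef⟩ : ∃ G : ℝ → ℝ, G = fun x => x^2/2 - |z| * x + z^2/2 + lam * Φ |x| :=
        ⟨_, rfl⟩
      have hJG : ∀ y : ℝ, J₁ y = G (s * y) := by
        intro y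
        rw [hJ, hGdef]
        simp only []
        have h1 : |s * y| = |y| := by rw [abs_mul, hsabs, one_mul]
        have h2 : (s*y)^2 = y^2 := by nlinarith [hs2]
        have h3 : |z| * (s * y) = z * y := by rw [← mul_assoc, mul_comm |z| s, hsz']
        rw [h1, h2, h3]
        ring
      have hGmin : IsLocalMin G (s * b) := by
        have hmap : Filter.Tendsto (fun u : ℝ => s * u) (𝓝 (s*b)) (𝓝 b) := by
          have hcont := (continuous_const.mul continuous_id :
            Continuous fun u : ℝ => s * u).tendsto (s*b)
          have he : s * (s * b) = b := by rw [← mul_assoc, hs2, one_mul]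
          simp only [Pi.mul_apply] at hcont
          rwa [he] at hcont
        have hev := hmap.eventually hbmin
        refine Filter.Eventually.mono hev ?_
        intro u hu
        have e1 : J₁ b = G (s*b) := hJG b
        have e2 : J₁ (s*u) = G (s*(s*u)) := hJG (s*u)
        rw [← mul_assoc, hs2, one_mul] at e2
        rw [e1, e2] at hu
        exact hu
      have hsb : s * b ≠ 0 := by
        intro h
        rcases mul_eq_zero.mp h with h | h
        · rw [hsdef] at h
          exact hzne (Real.sign_eq_zero_iff.mp h)
        · exact hbne h
      have hGpos : ∀ x : ℝ, 0 < x → HasDerivAt G (x - |z| + lam * deriv Φ x) x := by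
        intro x hx0
        have hp : HasDerivAt (fun y : ℝ => y^2/2 - |z| * y + z^2/2) (x - |z|) x := by
          have h2 : HasDerivAt (fun y : ℝ => y^2) (2*x) x := by simpa using hasDerivAt_pow 2 x
          have h3 := ((h2.div_const 2).sub ((hasDerivAt_id x).const_mul |z|)).add_const (z^2/2)
          convert h3 using 1
          all_goals first | rfl | ring
        have h1 := hp.add ((hD1At x (Set.mem_Ioi.mpr hx0)).const_mul lam)
        have heq : G =ᶠ[𝓝 x] fun y => y^2/2 - |z| * y + z^2/2 + lam * Φ y := by
          filter_upwards [isOpen_Ioi.mem_nhds (Set.mem_Ioi.mpr hx0)] with y hy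
          rw [hGdef]
          simp only []
          rw [abs_of_pos (Set.mem_Ioi.mp hy)]
        exact h1.congr_of_eventuallyEq heq
      have hGneg : ∀ x : ℝ, x < 0 → HasDerivAt G (x - |z| - lam * deriv Φ (-x)) x := by
        intro x hx0
        have hp : HasDerivAt (fun y : ℝ => y^2/2 - |z| * y + z^2/2) (x - |z|) x := by
          have h2 : HasDerivAt (fun y : ℝ => y^2) (2*x) x := by simpa using hasDerivAt_pow 2 x
          have h3 := ((h2.div_const 2).sub ((hasDerivAt_id x).const_mul |z|)).add_const (z^2/2)
          convert h3 using 1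
          all_goals first | rfl | ring
        have hneg : HasDerivAt (fun y : ℝ => Φ (-y)) (-(deriv Φ (-x))) x := by
          have h1 := hD1At (-x) (Set.mem_Ioi.mpr (by linarith))
          have h2 := HasDerivAt.comp x h1 (hasDerivAt_neg x)
          simp only [Function.comp_def] at h2
          convert h2 using 1
          all_goals first | rfl | ring
        have h1 := hp.add (hneg.const_mul lam)
        have heq : G =ᶠ[𝓝 x] fun y => y^2/2 - |z| * y + z^2/2 + lam * Φ (-y) := by
          filter_upwards [isOpen_Iio.mem_nhds (Set.mem_Iio.mpr hx0)] with y hy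
          rw [hGdef]
          simp only []
          rw [abs_of_neg (Set.mem_Iio.mp hy)]
        refine HasDerivAt.congr_of_eventuallyEq ?_ heq
        convert h1 using 1
        all_goals first | rfl | ring
      rcases lt_trichotomy (s*b) 0 with hx | hx | hx
      · exfalso
        have hd := (hGneg _ hx).deriv
        rw [hGmin.deriv_eq_zero] at hd
        have hD := hD1nn (-(s*b)) (Set.mem_Ioi.mpr (by linarith))
        nlinarith [hd, hzabs, hlam]
      · exact absurd hx hsb
      · have hρx : (s*b) + lam * deriv Φ (s*b) = |z| := by
          have hd := (hGpos _ hx).deriv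
          rw [hGmin.deriv_eq_zero] at hd
          linarith [hd]
        have hxgt : sstar < s*b := by
          rcases lt_trichotomy (s*b) sstar with h | h | h
          · exfalso
            have hGmono : StrictMonoOn G (Set.Ioc 0 (s*b)) := by
              refine my_strictMonoOn (f' := fun t => t - |z| + lam * deriv Φ t)
                (convex_Ioc 0 (s*b)) (fun t ht => Set.mem_Ioi.mpr ht.1) ?_ ?_
              · intro t ht
                exact hGpos t (Set.mem_Ioi.mp ht)
              · intro t ht
                rw [interior_Ioc] at ht
                have h1 := hρantistrict
                  (Set.mem_Ioc.mpr ⟨ht.1, (lt_trans ht.2 h).le⟩)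
                  (Set.mem_Ioc.mpr ⟨hx, h.le⟩) ht.2
                have h2 : (s*b) + lam * deriv Φ (s*b) < t + lam * deriv Φ t := h1
                rw [hρx] at h2
                show 0 < t - |z| + lam * deriv Φ t
                linarith
            have hGev : ∀ᶠ y in 𝓝[<] (s*b), G (s*b) ≤ G y :=
              Filter.Eventually.filter_mono nhdsWithin_le_nhds hGmin
            have hmemIoo : Set.Ioo 0 (s*b) ∈ 𝓝[<] (s*b) := Ioo_mem_nhdsLT hx
            obtain ⟨y, hyG, hymem⟩ :=
              (hGev.and (Filter.eventually_of_mem hmemIoo (fun y hy => hy))).exists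
            have h3 := hGmono (Set.mem_Ioc.mpr ⟨hymem.1, hymem.2.le⟩)
              (Set.mem_Ioc.mpr ⟨hx, le_rfl⟩) hymem.2
            linarith
          · exfalso
            rw [h] at hρx
            linarith [hzgt]
          · exact h
        have hbk : s*b = κ := by
          rcases lt_trichotomy (s*b) κ with h | h | h
          · have h3 := hρstrict (Set.mem_Ici.mpr hxgt.le) (Set.mem_Ici.mpr hκmem.1.le) h
            simp only [] at h3
            rw [hρx, hκeq] at h3
            exact absurd h3 (lt_irrefl _)
          · exact h
          · have h3 := hρstrict (Set.mem_Ici.mpr hκmem.1.le) (Set.mem_Ici.mpr hxgt.le) h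
            simp only [] at h3
            rw [hρx, hκeq] at h3
            exact absurd h3 (lt_irrefl _)
        rw [← hsdef, ← hbk, ← mul_assoc, hs2, one_mul]
end aux
end

section
/- Let Φ be a nonzero Bernstein function on (0,∞) with Φ(0+) = 0, Φ'(0+) < ∞, Φ''(0+) > −∞, and lim_{s→∞} Φ(s)/s = lim_{s→∞} Φ'(s) = 0, and let λ > 0 be fixed. For each t for which the equation b + λΦ'(b) = t has a root in (0, t) (when λ ≤ −1/Φ''(0+)) or in (s*, t) (when λ > −1/Φ''(0+), where s* is the unique positive root of 1 + λΦ''(s) = 0), denote this root by κ(t). Then κ is strictly increasing: if t₁ < t₂ are two such values, then κ(t₁) < κ(t₂). -/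
open Set Filter Topology

theorem stmt_10 (Φ : ℝ → ℝ) (hB : IsBernstein Φ)
    (hnz : ∃ s, 0 < s ∧ 0 < Φ s)
    (h0 : Filter.Tendsto Φ (𝓝[>] (0:ℝ)) (𝓝 0))
    (hΦ0 : Φ 0 = 0)
    (d : ℝ) (hd : Filter.Tendsto (deriv Φ) (𝓝[>] (0:ℝ)) (𝓝 d))
    (c : ℝ) (hc : Filter.Tendsto (deriv (deriv Φ)) (𝓝[>] (0:ℝ)) (𝓝 c))
    (hlin : Filter.Tendsto (fun s => Φ s / s) Filter.atTop (𝓝 0))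
    (hdtop : Filter.Tendsto (deriv Φ) Filter.atTop (𝓝 0))
    (lam : ℝ) (hlam : 0 < lam) :
    (lam ≤ -(1/c) →
      ∀ t₁ t₂ κ₁ κ₂ : ℝ, κ₁ ∈ Set.Ioo (0:ℝ) t₁ → κ₂ ∈ Set.Ioo (0:ℝ) t₂ →
        κ₁ + lam * deriv Φ κ₁ = t₁ → κ₂ + lam * deriv Φ κ₂ = t₂ →
        t₁ < t₂ → κ₁ < κ₂) ∧
    (-(1/c) < lam →
      ∀ sstar : ℝ, 0 < sstar → 1 + lam * deriv (deriv Φ) sstar = 0 →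
      ∀ t₁ t₂ κ₁ κ₂ : ℝ, κ₁ ∈ Set.Ioo sstar t₁ → κ₂ ∈ Set.Ioo sstar t₂ →
        κ₁ + lam * deriv Φ κ₁ = t₁ → κ₂ + lam * deriv Φ κ₂ = t₂ →
        t₁ < t₂ → κ₁ < κ₂) := by
  have hC1 : ContDiffOn ℝ (⊤ : ℕ∞) (deriv Φ) (Set.Ioi 0) :=
    hB.1.deriv_of_isOpen isOpen_Ioi (by simp)
  have hC2 : ContDiffOn ℝ (⊤ : ℕ∞) (deriv (deriv Φ)) (Set.Ioi 0) :=
    hC1.deriv_of_isOpen isOpen_Ioi (by simp)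
  have hd3 : ∀ s ∈ Set.Ioi (0:ℝ), 0 ≤ deriv (deriv (deriv Φ)) s := by
    intro s hs
    have h := hB.2.2 3 (by norm_num) s hs
    have h3 : iteratedDeriv 3 Φ = deriv (deriv (deriv Φ)) := by
      rw [show (3:ℕ) = 2 + 1 from rfl, iteratedDeriv_succ,
        show (2:ℕ) = 1 + 1 from rfl, iteratedDeriv_succ, iteratedDeriv_one]
    rw [h3] at h
    simpa using h
  -- Φ'' is monotone on (0,∞)
  have hmono2 : MonotoneOn (deriv (deriv Φ)) (Set.Ioi 0) := by
    apply monotoneOn_of_deriv_nonneg (convex_Ioi 0) hC2.continuousOn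
    · rw [interior_Ioi]
      exact (hC2.differentiableOn (by simp))
    · rw [interior_Ioi]; exact hd3
  -- derivative of g
  have hgdiff : ∀ x ∈ Set.Ioi (0:ℝ),
      HasDerivAt (fun b => b + lam * deriv Φ b) (1 + lam * deriv (deriv Φ) x) x := by
    intro x hx
    have hΦ' : DifferentiableAt ℝ (deriv Φ) x :=
      ((hC1.differentiableOn (by simp)).differentiableAt (isOpen_Ioi.mem_nhds hx))
    exact (hasDerivAt_id x).add (hΦ'.hasDerivAt.const_mul lam)
  -- main monotonicity lemma
  have main : ∀ a : ℝ, 0 ≤ a → (∀ x ∈ Set.Ioi a, 0 ≤ 1 + lam * deriv (deriv Φ) x) →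
      MonotoneOn (fun b => b + lam * deriv Φ b) (Set.Ioi a) := by
    intro a ha hpos
    have hsub : Set.Ioi a ⊆ Set.Ioi (0:ℝ) := fun x hx => lt_of_le_of_lt ha hx
    apply monotoneOn_of_deriv_nonneg (convex_Ioi a)
    · exact fun x hx => ((hgdiff x (hsub hx)).differentiableAt.continuousAt).continuousWithinAt
    · rw [interior_Ioi]
      exact fun x hx => (hgdiff x (hsub hx)).differentiableAt.differentiableWithinAt
    · rw [interior_Ioi]
      intro x hx
      rw [(hgdiff x (hsub hx)).deriv]
      exact hpos x hx
  constructor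
  · -- case λ ≤ -1/c
    intro hle t₁ t₂ κ₁ κ₂ hκ₁ hκ₂ he₁ he₂ ht
    -- c < 0
    have hcneg : c < 0 := by
      rcases lt_trichotomy c 0 with h | h | h
      · exact h
      · rw [h] at hle; simp at hle; linarith
      · have h1 : 0 < 1/c := by positivity
        linarith
    have hkey : ∀ x ∈ Set.Ioi (0:ℝ), 0 ≤ 1 + lam * deriv (deriv Φ) x := by
      intro x hx
      -- Φ''(x) ≥ c
      have hge : c ≤ deriv (deriv Φ) x := by
        refine le_of_tendsto hc ?_
        filter_upwards [Ioo_mem_nhdsGT_of_mem (Set.left_mem_Ico.2 hx)] with s hs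
        exact hmono2 hs.1 hx hs.2.le
      have h1 : lam * (-c) ≤ 1 := by
        have hcc : c * (1/c) = 1 := mul_one_div_cancel hcneg.ne
        nlinarith [mul_le_mul_of_nonneg_right hle (show (0:ℝ) ≤ -c by linarith)]
      nlinarith
    have hmono := main 0 le_rfl hkey
    by_contra hlt
    push_neg at hlt
    have := hmono hκ₂.1 hκ₁.1 hlt
    simp only at this
    rw [he₁, he₂] at this
    linarith
  · -- case λ > -1/c
    intro _ sstar hsstar hroot t₁ t₂ κ₁ κ₂ hκ₁ hκ₂ he₁ he₂ ht
    have hkey : ∀ x ∈ Set.Ioi sstar, 0 ≤ 1 + lam * deriv (deriv Φ) x := by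
      intro x hx
      have hge : deriv (deriv Φ) sstar ≤ deriv (deriv Φ) x :=
        hmono2 hsstar (lt_trans hsstar hx) (le_of_lt hx)
      nlinarith
    have hmono := main sstar hsstar.le hkey
    by_contra hlt
    push_neg at hlt
    have := hmono hκ₂.1 hκ₁.1 hlt
    simp only at this
    rw [he₁, he₂] at this
    linarith
end

section
/- Let Φ be a nonzero Bernstein function on (0,∞) with Φ(0+) = 0, Φ'(0+) = 1, Φ''(0+) > −∞, and lim_{s→∞} Φ(s)/s = 0, and let S_α(z,η) be the associated threshold operator. Then for every z ∈ ℝ and η > 0: lim_{α→0+} S_α(z,η) = sgn(z)(|z| − η) if |z| > η, and lim_{α→0+} S_α(z,η) = 0 if |z| ≤ η. That is, as α → 0+ the threshold operator converges to the soft-threshold operator. -/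
open Set Filter Topology

/-- The defining property of the threshold operator `S_α(z, η)` associated with a
Bernstein penalty `Φ` whose second derivative has right limit `c` at `0`.
`S` denotes the value `S_α(z, η)`. -/
def ThresholdSpec (Φ : ℝ → ℝ) (c α η z S : ℝ) : Prop :=
  (η ≤ -(Φ α / (α^2 * c)) →
    (|z| ≤ η * α / Φ α → S = 0) ∧
    (η * α / Φ α < |z| →
      ∃ κ ∈ Set.Ioo (0:ℝ) |z|,
        κ + (η * α / Φ α) * deriv Φ (α * κ) = |z| ∧
        (∀ κ' ∈ Set.Ioo (0:ℝ) |z|,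
          κ' + (η * α / Φ α) * deriv Φ (α * κ') = |z| → κ' = κ) ∧
        S = Real.sign z * κ)) ∧
  (-(Φ α / (α^2 * c)) < η →
    ∃ sstar ∈ Set.Ioi (0:ℝ),
      1 + (η * α^2 / Φ α) * deriv (deriv Φ) (α * sstar) = 0 ∧
      (|z| ≤ sstar + (η * α / Φ α) * deriv Φ (α * sstar) → S = 0) ∧
      (sstar + (η * α / Φ α) * deriv Φ (α * sstar) < |z| →
        ∃ κ ∈ Set.Ioo sstar |z|,
          κ + (η * α / Φ α) * deriv Φ (α * κ) = |z| ∧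
          (∀ κ' ∈ Set.Ioo sstar |z|,
            κ' + (η * α / Φ α) * deriv Φ (α * κ') = |z| → κ' = κ) ∧
          S = Real.sign z * κ))

theorem stmt_11 (Φ : ℝ → ℝ) (hB : IsBernstein Φ)
    (hnz : ∃ s, 0 < s ∧ 0 < Φ s)
    (h0 : Filter.Tendsto Φ (𝓝[>] (0:ℝ)) (𝓝 0))
    (hΦ0 : Φ 0 = 0)
    (hd1 : Filter.Tendsto (deriv Φ) (𝓝[>] (0:ℝ)) (𝓝 1))
    (c : ℝ) (hc : Filter.Tendsto (deriv (deriv Φ)) (𝓝[>] (0:ℝ)) (𝓝 c))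
    (hlin : Filter.Tendsto (fun s => Φ s / s) Filter.atTop (𝓝 0))
    (z η : ℝ) (hη : 0 < η)
    (S : ℝ → ℝ) (hS : ∀ α : ℝ, 0 < α → ThresholdSpec Φ c α η z (S α)) :
    (η < |z| →
      Filter.Tendsto S (𝓝[>] (0:ℝ)) (𝓝 (Real.sign z * (|z| - η)))) ∧
    (|z| ≤ η → Filter.Tendsto S (𝓝[>] (0:ℝ)) (𝓝 0)) := by
  obtain ⟨hsmooth, hnonneg, hsigns⟩ := hB
  have hopen : IsOpen (Ioi (0:ℝ)) := isOpen_Ioi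
  have hΦdiff : ∀ s : ℝ, 0 < s → DifferentiableAt ℝ Φ s := fun s hs =>
    (hsmooth.contDiffAt (hopen.mem_nhds hs)).differentiableAt (by simp)
  have hΦ'cd : ContDiffOn ℝ (⊤ : ℕ∞) (deriv Φ) (Ioi 0) := hsmooth.deriv_of_isOpen hopen (by simp)
  have hΦ''cd : ContDiffOn ℝ (⊤ : ℕ∞) (deriv (deriv Φ)) (Ioi 0) := hΦ'cd.deriv_of_isOpen hopen (by simp)
  have hit2 : iteratedDeriv 2 Φ = deriv (deriv Φ) := by
    rw [show (2:ℕ) = 1 + 1 from rfl, iteratedDeriv_succ, iteratedDeriv_one]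
  have hit3 : iteratedDeriv 3 Φ = deriv (deriv (deriv Φ)) := by
    rw [show (3:ℕ) = 2 + 1 from rfl, iteratedDeriv_succ, hit2]
  have hd2' : ∀ s : ℝ, 0 < s → deriv (deriv Φ) s ≤ 0 := by
    intro s hs
    have h := hsigns 2 (by norm_num) s hs
    rw [hit2] at h
    norm_num at h
    linarith
  have hd3' : ∀ s : ℝ, 0 < s → 0 ≤ deriv (deriv (deriv Φ)) s := by
    intro s hs
    have h := hsigns 3 (by norm_num) s hs
    rw [hit3] at h
    norm_num at h
    linarith
  have hanti : AntitoneOn (deriv Φ) (Ioi 0) := by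
    apply antitoneOn_of_deriv_nonpos (convex_Ioi 0) hΦ'cd.continuousOn
    · rw [interior_Ioi]; exact hΦ'cd.differentiableOn (by simp)
    · rw [interior_Ioi]; exact fun x hx => hd2' x hx
  have hmono'' : MonotoneOn (deriv (deriv Φ)) (Ioi 0) := by
    apply monotoneOn_of_deriv_nonneg (convex_Ioi 0) hΦ''cd.continuousOn
    · rw [interior_Ioi]
      exact hΦ''cd.differentiableOn (by simp)
    · rw [interior_Ioi]; exact fun x hx => hd3' x hx
  have hΦ'le1 : ∀ s : ℝ, 0 < s → deriv Φ s ≤ 1 := by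
    intro s hs
    refine ge_of_tendsto hd1 ?_
    filter_upwards [Ioo_mem_nhdsGT_of_mem (⟨le_refl 0, hs⟩ : (0:ℝ) ∈ Ico 0 s)] with t ht
    exact hanti (mem_Ioi.2 ht.1) (mem_Ioi.2 hs) ht.2.le
  have hΦ''ge : ∀ s : ℝ, 0 < s → c ≤ deriv (deriv Φ) s := by
    intro s hs
    refine le_of_tendsto hc ?_
    filter_upwards [Ioo_mem_nhdsGT_of_mem (⟨le_refl 0, hs⟩ : (0:ℝ) ∈ Ico 0 s)] with t ht
    exact hmono'' (mem_Ioi.2 ht.1) (mem_Ioi.2 hs) ht.2.le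
  have hMVT : ∀ α : ℝ, 0 < α → ∃ ξ ∈ Ioo (0:ℝ) α, deriv Φ ξ = Φ α / α := by
    intro α hα
    have hcont : ContinuousOn Φ (Icc 0 α) := by
      intro x hx
      rcases hx.1.eq_or_lt with rfl | hx0
      · have h1 : ContinuousWithinAt Φ (Ioi 0) 0 := by
          rw [ContinuousWithinAt, hΦ0]; exact h0
        exact (continuousWithinAt_Ioi_iff_Ici.mp h1).mono Icc_subset_Ici_self
      · exact (hΦdiff x hx0).continuousAt.continuousWithinAt
    have hdiff : DifferentiableOn ℝ Φ (Ioo 0 α) := fun x hx =>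
      (hΦdiff x hx.1).differentiableWithinAt
    obtain ⟨ξ, hξ, hξeq⟩ := exists_deriv_eq_slope Φ hα hcont hdiff
    exact ⟨ξ, hξ, by rw [hξeq, hΦ0, sub_zero, sub_zero]⟩
  have hslope : ∀ α : ℝ, 0 < α → deriv Φ α ≤ Φ α / α ∧ Φ α / α ≤ 1 := by
    intro α hα
    obtain ⟨ξ, hξ, hξeq⟩ := hMVT α hα
    rw [← hξeq]
    exact ⟨hanti (mem_Ioi.2 hξ.1) (mem_Ioi.2 hα) hξ.2.le, hΦ'le1 ξ hξ.1⟩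
  have hq : Tendsto (fun α => Φ α / α) (𝓝[>] (0:ℝ)) (𝓝 1) := by
    refine tendsto_of_tendsto_of_tendsto_of_le_of_le' hd1 tendsto_const_nhds ?_ ?_
    · filter_upwards [self_mem_nhdsWithin] with α hα using (hslope α hα).1
    · filter_upwards [self_mem_nhdsWithin] with α hα using (hslope α hα).2
  have hpos : ∀ᶠ α in 𝓝[>] (0:ℝ), 0 < Φ α := by
    filter_upwards [self_mem_nhdsWithin, hd1.eventually (eventually_gt_nhds zero_lt_one)]
      with α hα hd
    have h2 : 0 < Φ α / α := lt_of_lt_of_le hd (hslope α hα).1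
    have h3 := (lt_div_iff₀ hα).mp h2
    simpa using h3
  have hg : Tendsto (fun α => η * α / Φ α) (𝓝[>] (0:ℝ)) (𝓝 η) := by
    have h1 : Tendsto (fun α => η / (Φ α / α)) (𝓝[>] (0:ℝ)) (𝓝 (η / 1)) :=
      tendsto_const_nhds.div hq one_ne_zero
    rw [div_one] at h1
    exact h1.congr fun α => div_div_eq_mul_div η (Φ α) α
  have hbig : Tendsto (fun α => Φ α / (η * α ^ 2)) (𝓝[>] (0:ℝ)) atTop := by
    have h2 : Tendsto (fun α : ℝ => η * α) (𝓝[>] (0:ℝ)) (𝓝[>] (0:ℝ)) := by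
      apply tendsto_nhdsWithin_of_tendsto_nhds_of_eventually_within
      · have h : Tendsto (fun α : ℝ => η * α) (𝓝 (0:ℝ)) (𝓝 (η * 0)) :=
          (continuous_const.mul continuous_id).tendsto 0
        rw [mul_zero] at h
        exact h.mono_left nhdsWithin_le_nhds
      · filter_upwards [self_mem_nhdsWithin] with α hα using mul_pos hη hα
    have h3 : Tendsto (fun α : ℝ => (η * α)⁻¹) (𝓝[>] (0:ℝ)) atTop :=
      tendsto_inv_nhdsGT_zero.comp h2
    have h4 := Filter.Tendsto.pos_mul_atTop zero_lt_one hq h3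
    refine h4.congr fun α => ?_
    rw [← div_eq_mul_inv, div_div]
    congr 1
    ring
  have hzconv : ∀ w : ℝ, 0 < w →
      Tendsto (fun α => deriv Φ (α * w)) (𝓝[>] (0:ℝ)) (𝓝 1) := by
    intro w hw
    apply hd1.comp
    apply tendsto_nhdsWithin_of_tendsto_nhds_of_eventually_within
    · have h : Tendsto (fun α : ℝ => α * w) (𝓝 (0:ℝ)) (𝓝 (0 * w)) :=
        (continuous_id.mul continuous_const).tendsto 0
      rw [zero_mul] at h
      exact h.mono_left nhdsWithin_le_nhds
    · filter_upwards [self_mem_nhdsWithin] with α hα using mul_pos hα hw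
  have key : ∀ᶠ α in 𝓝[>] (0:ℝ),
      ((|z| ≤ η * α / Φ α ∧ S α = 0) ∨
       (η * α / Φ α < |z| ∧ ∃ κ, |z| - η * α / Φ α ≤ κ ∧
         κ ≤ |z| - (η * α / Φ α) * deriv Φ (α * |z|) ∧
         0 < κ ∧ S α = Real.sign z * κ)) := by
    filter_upwards [self_mem_nhdsWithin, hpos, hbig.eventually_gt_atTop (-c)]
      with α hα hΦα hcc
    have hα : (0:ℝ) < α := hα
    obtain ⟨hb1, hb2⟩ := hS α hα
    rcases le_or_gt η (-(Φ α / (α ^ 2 * c))) with hcase | hcase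
    · obtain ⟨hz0, hznz⟩ := hb1 hcase
      rcases le_or_gt |z| (η * α / Φ α) with hlez | hgtz
      · exact Or.inl ⟨hlez, hz0 hlez⟩
      · obtain ⟨κ, hκmem, hκeq, -, hκS⟩ := hznz hgtz
        have hg0 : 0 < η * α / Φ α := div_pos (mul_pos hη hα) hΦα
        have h1 : deriv Φ (α * κ) ≤ 1 := hΦ'le1 _ (mul_pos hα hκmem.1)
        have h2 : deriv Φ (α * |z|) ≤ deriv Φ (α * κ) :=
          hanti (mem_Ioi.2 (mul_pos hα hκmem.1))
            (mem_Ioi.2 (mul_pos hα (hκmem.1.trans hκmem.2)))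
            (mul_le_mul_of_nonneg_left hκmem.2.le hα.le)
        refine Or.inr ⟨hgtz, κ, ?_, ?_, hκmem.1, hκS⟩
        · nlinarith
        · nlinarith
    · exfalso
      obtain ⟨sstar, hsmem, hseq, -, -⟩ := hb2 hcase
      have hs0 : (0:ℝ) < sstar := hsmem
      have hge : c ≤ deriv (deriv Φ) (α * sstar) := hΦ''ge _ (mul_pos hα hs0)
      have hpos2 : (0:ℝ) < η * α ^ 2 := by positivity
      have hcc' : -c * (η * α ^ 2) < Φ α := (lt_div_iff₀ hpos2).mp hcc
      have hseq2 : Φ α + (η * α ^ 2) * deriv (deriv Φ) (α * sstar) = 0 := by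
        field_simp [ne_of_gt hΦα] at hseq
        nlinarith [hseq]
      nlinarith [mul_le_mul_of_nonneg_right hge hpos2.le]
  constructor
  · intro hzη
    have hz0 : (0:ℝ) < |z| := lt_trans hη hzη
    have hU : Tendsto (fun α => |z| - (η * α / Φ α) * deriv Φ (α * |z|)) (𝓝[>] (0:ℝ))
        (𝓝 (|z| - η)) := by
      have h := (tendsto_const_nhds : Tendsto (fun _ : ℝ => |z|) (𝓝[>] (0:ℝ)) (𝓝 |z|)).sub (hg.mul (hzconv _ hz0))
      rwa [mul_one] at h
    have hL : Tendsto (fun α => |z| - η * α / Φ α) (𝓝[>] (0:ℝ)) (𝓝 (|z| - η)) :=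
      (tendsto_const_nhds : Tendsto (fun _ : ℝ => |z|) (𝓝[>] (0:ℝ)) (𝓝 |z|)).sub hg
    have hzne : z ≠ 0 := abs_pos.mp hz0
    have hsz : Real.sign z * Real.sign z = 1 := by
      rcases lt_or_gt_of_ne hzne with h | h
      · rw [Real.sign_of_neg h]; norm_num
      · rw [Real.sign_of_pos h]; norm_num
    have hev : ∀ᶠ α in 𝓝[>] (0:ℝ),
        |z| - η * α / Φ α ≤ Real.sign z * S α ∧
        Real.sign z * S α ≤ |z| - (η * α / Φ α) * deriv Φ (α * |z|) := by
      filter_upwards [key, hg.eventually (eventually_lt_nhds hzη)] with α hk hlt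
      rcases hk with ⟨hle, -⟩ | ⟨-, κ, h1, h2, h3, h4⟩
      · exact absurd (hle.trans_lt hlt) (lt_irrefl _)
      · rw [h4, ← mul_assoc, hsz, one_mul]
        exact ⟨h1, h2⟩
    have hT : Tendsto (fun α => Real.sign z * S α) (𝓝[>] (0:ℝ)) (𝓝 (|z| - η)) :=
      tendsto_of_tendsto_of_tendsto_of_le_of_le' hL hU
        (hev.mono fun α h => h.1) (hev.mono fun α h => h.2)
    have h := hT.const_mul (Real.sign z)
    refine h.congr fun α => ?_
    rw [← mul_assoc, hsz, one_mul]
  · intro hzη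
    rcases eq_or_ne z 0 with rfl | hzne
    · have hev : ∀ᶠ α in 𝓝[>] (0:ℝ), S α = 0 := by
        filter_upwards [key, self_mem_nhdsWithin, hpos] with α hk hα hΦα
        rcases hk with ⟨-, h⟩ | ⟨hlt, -⟩
        · exact h
        · rw [abs_zero] at hlt
          exact absurd hlt (not_lt.2 (div_pos (mul_pos hη hα) hΦα).le)
      exact Tendsto.congr' (hev.mono fun α h => h.symm) tendsto_const_nhds
    · have hz0 : (0:ℝ) < |z| := abs_pos.2 hzne
      have hU : Tendsto (fun α => |z| - (η * α / Φ α) * deriv Φ (α * |z|)) (𝓝[>] (0:ℝ))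
          (𝓝 (|z| - η)) := by
        have h := (tendsto_const_nhds : Tendsto (fun _ : ℝ => |z|) (𝓝[>] (0:ℝ)) (𝓝 |z|)).sub (hg.mul (hzconv _ hz0))
        rwa [mul_one] at h
      have hsz : |Real.sign z| = 1 := by
        rcases lt_or_gt_of_ne hzne with h | h
        · rw [Real.sign_of_neg h]; norm_num
        · rw [Real.sign_of_pos h]; norm_num
      have hbound : ∀ᶠ α in 𝓝[>] (0:ℝ),
          ‖S α‖ ≤ max 0 (|z| - (η * α / Φ α) * deriv Φ (α * |z|)) := by
        filter_upwards [key] with α hk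
        rw [Real.norm_eq_abs]
        rcases hk with ⟨-, h⟩ | ⟨-, κ, h1, h2, h3, h4⟩
        · rw [h, abs_zero]; exact le_max_left _ _
        · rw [h4, abs_mul, hsz, one_mul, abs_of_pos h3]
          exact h2.trans (le_max_right _ _)
      have hmax : Tendsto (fun α => max 0 (|z| - (η * α / Φ α) * deriv Φ (α * |z|)))
          (𝓝[>] (0:ℝ)) (𝓝 0) := by
        have h := (tendsto_const_nhds : Tendsto (fun _ : ℝ => (0:ℝ)) (𝓝[>] (0:ℝ)) (𝓝 0)).max hU
        rwa [max_eq_left (sub_nonpos.2 hzη)] at h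
      exact squeeze_zero_norm' hbound hmax
end

section
/- Let Φ be a nonzero Bernstein function on (0,∞) with Φ(0+) = 0, Φ'(0+) = 1, Φ''(0+) > −∞, and lim_{s→∞} Φ(s)/s = 0, and let S_α(z,η) be the associated threshold operator. If in addition lim_{α→∞} αΦ'(α)/Φ(α) = 0, then for every z ∈ ℝ and η > 0, lim_{α→∞} S_α(z,η) = z. -/
open Set Filter Topology

theorem stmt_12 (Φ : ℝ → ℝ) (hB : IsBernstein Φ)
    (hnz : ∃ s, 0 < s ∧ 0 < Φ s)
    (h0 : Filter.Tendsto Φ (𝓝[>] (0:ℝ)) (𝓝 0))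
    (hΦ0 : Φ 0 = 0)
    (hd1 : Filter.Tendsto (deriv Φ) (𝓝[>] (0:ℝ)) (𝓝 1))
    (c : ℝ) (hc : Filter.Tendsto (deriv (deriv Φ)) (𝓝[>] (0:ℝ)) (𝓝 c))
    (hlin : Filter.Tendsto (fun s => Φ s / s) Filter.atTop (𝓝 0))
    (hslow : Filter.Tendsto (fun α => α * deriv Φ α / Φ α) Filter.atTop (𝓝 0))
    (z η : ℝ) (hη : 0 < η)
    (S : ℝ → ℝ) (hS : ∀ α : ℝ, 0 < α → ThresholdSpec Φ c α η z (S α)) :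
    Filter.Tendsto S Filter.atTop (𝓝 z) := by
  obtain ⟨s₀, hs₀, hΦs₀⟩ := hnz
  have hΦc : ContDiffOn ℝ (⊤ : ℕ∞) Φ (Set.Ioi 0) := hB.1
  have hO : IsOpen (Set.Ioi (0:ℝ)) := isOpen_Ioi
  have hd1c : ContDiffOn ℝ (⊤ : ℕ∞) (deriv Φ) (Set.Ioi 0) := hΦc.deriv_of_isOpen hO (by simp)
  have hd2c : ContDiffOn ℝ (⊤ : ℕ∞) (deriv (deriv Φ)) (Set.Ioi 0) := hd1c.deriv_of_isOpen hO (by simp)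
  have hdAt : ∀ f : ℝ → ℝ, ContDiffOn ℝ (⊤ : ℕ∞) f (Set.Ioi 0) → ∀ x : ℝ, 0 < x →
      DifferentiableAt ℝ f x := fun f hf x hx =>
    (hf.contDiffAt (hO.mem_nhds hx)).differentiableAt (by simp)
  have hiter2 : iteratedDeriv 2 Φ = deriv (deriv Φ) := by
    rw [show (2:ℕ) = 1 + 1 from rfl, iteratedDeriv_succ, iteratedDeriv_one]
  have hiter3 : iteratedDeriv 3 Φ = deriv (deriv (deriv Φ)) := by
    rw [show (3:ℕ) = 2 + 1 from rfl, iteratedDeriv_succ, hiter2]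
  have h1 : ∀ x : ℝ, 0 < x → 0 ≤ deriv Φ x := by
    intro x hx
    have := hB.2.2 1 le_rfl x hx
    simpa [iteratedDeriv_one] using this
  have h2 : ∀ x : ℝ, 0 < x → deriv (deriv Φ) x ≤ 0 := by
    intro x hx
    have := hB.2.2 2 (by norm_num) x hx
    rw [hiter2] at this
    norm_num at this
    linarith
  have h3 : ∀ x : ℝ, 0 < x → 0 ≤ deriv (deriv (deriv Φ)) x := by
    intro x hx
    have := hB.2.2 3 (by norm_num) x hx
    rw [hiter3] at this
    norm_num at this
    linarith
  -- monotonicity facts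
  have mΦ : MonotoneOn Φ (Set.Ioi 0) := by
    apply monotoneOn_of_deriv_nonneg (convex_Ioi 0) hΦc.continuousOn
    · rw [interior_Ioi]
      exact fun x hx => (hdAt Φ hΦc x hx).differentiableWithinAt
    · rw [interior_Ioi]
      exact fun x hx => h1 x hx
  have aΦ' : AntitoneOn (deriv Φ) (Set.Ioi 0) := by
    apply antitoneOn_of_deriv_nonpos (convex_Ioi 0) hd1c.continuousOn
    · rw [interior_Ioi]
      exact fun x hx => (hdAt _ hd1c x hx).differentiableWithinAt
    · rw [interior_Ioi]
      exact fun x hx => h2 x hx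
  have mΦ'' : MonotoneOn (deriv (deriv Φ)) (Set.Ioi 0) := by
    apply monotoneOn_of_deriv_nonneg (convex_Ioi 0) hd2c.continuousOn
    · rw [interior_Ioi]
      exact fun x hx => (hdAt _ hd2c x hx).differentiableWithinAt
    · rw [interior_Ioi]
      exact fun x hx => h3 x hx
  have hΦpos : ∀ α : ℝ, s₀ ≤ α → 0 < Φ α := fun α hα =>
    lt_of_lt_of_le hΦs₀ (mΦ hs₀ (lt_of_lt_of_le hs₀ hα) hα)
  have hcle : c ≤ 0 :=
    le_of_tendsto hc (eventually_nhdsWithin_of_forall (fun x hx => h2 x hx))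
  -- eventually we are in the second case of the spec
  have hcase2 : ∀ᶠ α in atTop, -(Φ α / (α^2 * c)) < η := by
    rcases hcle.lt_or_eq with hclt | hceq
    · have hbound : ∀ᶠ α in atTop, Φ α / α < η * (-c) :=
        hlin.eventually_lt_const (by nlinarith)
      filter_upwards [hbound, eventually_ge_atTop (1:ℝ)] with α hA hα1
      have hαpos : 0 < α := lt_of_lt_of_le one_pos hα1
      have hΦnn : 0 ≤ Φ α := hB.2.1 α hαpos
      have h2' : Φ α / α^2 ≤ Φ α / α := by
        apply div_le_div_of_nonneg_left hΦnn hαpos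
        nlinarith
      have heq : -(Φ α / (α^2 * c)) = (Φ α / α^2) / (-c) := by
        rw [div_mul_eq_div_div, div_neg]
      rw [heq, div_lt_iff₀ (by linarith : (0:ℝ) < -c)]
      linarith
    · simp only [hceq, mul_zero, div_zero, neg_zero]
      filter_upwards with α
      exact hη
  -- key smallness lemma
  have key : ∀ δ ε' : ℝ, 0 < δ → δ ≤ 1 → 0 < ε' →
      ∀ᶠ α in atTop, η * α / Φ α * deriv Φ (α * δ) < ε' := by
    intro δ ε' hδ hδ1 hε'
    have htend : Tendsto (fun α : ℝ => (α * δ) * deriv Φ (α * δ) / Φ (α * δ)) atTop (𝓝 0) :=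
      hslow.comp (tendsto_id.atTop_mul_const hδ)
    have hsmall : ∀ᶠ α in atTop, (α * δ) * deriv Φ (α * δ) / Φ (α * δ) < δ * ε' / η :=
      htend.eventually_lt_const (by positivity)
    filter_upwards [hsmall, eventually_ge_atTop (max s₀ (s₀ / δ)),
      eventually_gt_atTop (0:ℝ)] with α hA hge hαpos
    have hβpos : 0 < α * δ := by positivity
    have hβs₀ : s₀ ≤ α * δ := by
      have := le_trans (le_max_right s₀ (s₀/δ)) hge
      calc s₀ = s₀ / δ * δ := by field_simp
        _ ≤ α * δ := by nlinarith
    have hΦβ : 0 < Φ (α * δ) := hΦpos _ hβs₀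
    have hΦα : 0 < Φ α := hΦpos α (le_trans (le_max_left _ _) hge)
    have hβα : α * δ ≤ α := by nlinarith
    have hΦβα : Φ (α * δ) ≤ Φ α := mΦ hβpos hαpos hβα
    have hd : 0 ≤ deriv Φ (α * δ) := h1 _ hβpos
    rw [div_mul_eq_mul_div, div_lt_iff₀ hΦα]
    have h5 : (α * δ) * deriv Φ (α * δ) < δ * ε' / η * Φ (α * δ) := (div_lt_iff₀ hΦβ).1 hA
    have h6 : η * ((α * δ) * deriv Φ (α * δ)) < δ * ε' * Φ (α * δ) := by
      have := mul_lt_mul_of_pos_left h5 hη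
      have heq : η * (δ * ε' / η * Φ (α * δ)) = δ * ε' * Φ (α * δ) := by
        field_simp
      linarith [this, heq.le, heq.ge]
    have h7 : η * ((α * δ) * deriv Φ (α * δ)) < δ * ε' * Φ α := by
      have : δ * ε' * Φ (α * δ) ≤ δ * ε' * Φ α :=
        mul_le_mul_of_nonneg_left hΦβα (by positivity)
      linarith
    nlinarith [h7, hδ]
  -- split on z
  rcases eq_or_ne z 0 with hz | hz
  · have hev : ∀ᶠ α in atTop, S α = 0 := by
      filter_upwards [hcase2, eventually_ge_atTop (max s₀ 1)] with α hα2 hαge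
      have hαpos : 0 < α := lt_of_lt_of_le one_pos (le_trans (le_max_right _ _) hαge)
      have hΦα : 0 < Φ α := hΦpos α (le_trans (le_max_left _ _) hαge)
      obtain ⟨sstar, hsmem, hstat, hzero, _⟩ := (hS α hαpos).2 hα2
      have hspos : 0 < sstar := hsmem
      apply hzero
      rw [hz, abs_zero]
      have hd : 0 ≤ deriv Φ (α * sstar) := h1 _ (by positivity)
      have : 0 ≤ η * α / Φ α * deriv Φ (α * sstar) :=
        mul_nonneg (by positivity) hd
      linarith
    rw [hz]
    exact Tendsto.congr' (hev.mono fun α h => h.symm) tendsto_const_nhds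
  · have hzabs : 0 < |z| := abs_pos.2 hz
    rw [Metric.tendsto_nhds]
    intro ε hε
    set δ : ℝ := min (min (1/2) ε) (|z| / 3) with hδdef
    have hδpos : 0 < δ := by
      apply lt_min (lt_min (by norm_num) hε) (by linarith)
    have hδhalf : δ ≤ 1/2 := le_trans (min_le_left _ _) (min_le_left _ _)
    have hδε : δ ≤ ε := le_trans (min_le_left _ _) (min_le_right _ _)
    have hδz : 3 * δ ≤ |z| := by
      have := min_le_right (min (1/2) ε) (|z| / 3)
      rw [hδdef]; linarith
    filter_upwards [hcase2, key δ δ hδpos (by linarith) hδpos,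
      key (2 * δ) δ (by linarith) (by linarith) hδpos,
      eventually_ge_atTop s₀, eventually_gt_atTop (0:ℝ)] with α hα2 hk1 hk2 hαs₀ hαpos
    have hΦα : 0 < Φ α := hΦpos α hαs₀
    have hCpos : 0 < η * α / Φ α := by positivity
    obtain ⟨sstar, hsmem, hstat, hzero, hbig⟩ := (hS α hαpos).2 hα2
    have hspos : 0 < sstar := hsmem
    -- derivative of g
    have hgd : ∀ x : ℝ, 0 < x →
        HasDerivAt (fun s : ℝ => s + η * α / Φ α * deriv Φ (α * s))
          (1 + η * α / Φ α * (deriv (deriv Φ) (α * x) * α)) x := by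
      intro x hx
      have hlin' : HasDerivAt (fun s : ℝ => α * s) α x := by
        simpa using (hasDerivAt_id x).const_mul α
      have hdd : HasDerivAt (deriv Φ) (deriv (deriv Φ) (α * x)) (α * x) :=
        (hdAt _ hd1c (α * x) (by positivity)).hasDerivAt
      have hcomp : HasDerivAt (fun s : ℝ => deriv Φ (α * s))
          (deriv (deriv Φ) (α * x) * α) x := hdd.comp x hlin'
      exact (hasDerivAt_id' x).add (hcomp.const_mul (η * α / Φ α))
    -- relate coefficient
    have hcoef : ∀ y : ℝ, η * α / Φ α * (y * α) = η * α ^ 2 / Φ α * y := by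
      intro y; field_simp
    have hstat' : 1 + η * α / Φ α * (deriv (deriv Φ) (α * sstar) * α) = 0 := by
      rw [hcoef]; exact hstat
    -- monotone on Ici sstar
    have hgmono : MonotoneOn (fun s : ℝ => s + η * α / Φ α * deriv Φ (α * s))
        (Set.Ici sstar) := by
      apply monotoneOn_of_deriv_nonneg (convex_Ici sstar)
      · exact fun x hx =>
          (hgd x (lt_of_lt_of_le hspos hx)).differentiableAt.continuousAt.continuousWithinAt
      · rw [interior_Ici]
        exact fun x hx => (hgd x (hspos.trans hx)).differentiableAt.differentiableWithinAt
      · rw [interior_Ici]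
        intro x hx
        rw [(hgd x (hspos.trans hx)).deriv]
        have hmono : deriv (deriv Φ) (α * sstar) ≤ deriv (deriv Φ) (α * x) :=
          mΦ'' (Set.mem_Ioi.mpr (mul_pos hαpos hspos))
            (Set.mem_Ioi.mpr (mul_pos hαpos (hspos.trans hx)))
            (mul_le_mul_of_nonneg_left (le_of_lt hx) hαpos.le)
        nlinarith [mul_pos hCpos hαpos]
    -- antitone on Ioc 0 sstar
    have hganti : AntitoneOn (fun s : ℝ => s + η * α / Φ α * deriv Φ (α * s))
        (Set.Ioc 0 sstar) := by
      apply antitoneOn_of_deriv_nonpos (convex_Ioc 0 sstar)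
      · exact fun x hx => (hgd x hx.1).differentiableAt.continuousAt.continuousWithinAt
      · rw [interior_Ioc]
        exact fun x hx => (hgd x hx.1).differentiableAt.differentiableWithinAt
      · rw [interior_Ioc]
        intro x hx
        rw [(hgd x hx.1).deriv]
        have hmono : deriv (deriv Φ) (α * x) ≤ deriv (deriv Φ) (α * sstar) :=
          mΦ'' (Set.mem_Ioi.mpr (mul_pos hαpos hx.1))
            (Set.mem_Ioi.mpr (mul_pos hαpos hspos))
            (mul_le_mul_of_nonneg_left hx.2.le hαpos.le)
        nlinarith [mul_pos hCpos hαpos]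
    -- threshold below |z|
    have hτ : sstar + η * α / Φ α * deriv Φ (α * sstar) < |z| := by
      have hgs : sstar + η * α / Φ α * deriv Φ (α * sstar) ≤
          δ + η * α / Φ α * deriv Φ (α * δ) := by
        rcases le_total sstar δ with h | h
        · exact hgmono (Set.self_mem_Ici) h h
        · exact hganti ⟨hδpos, h⟩ ⟨hspos, le_refl sstar⟩ h
      linarith [hk1, hδpos, hδz]
    obtain ⟨κ, hκmem, hκeq, _, hSval⟩ := hbig hτ
    have hκlt : κ < |z| := hκmem.2
    have hκgt : sstar < κ := hκmem.1
    -- κ is at least 2δ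
    have h2δκ : 2 * δ ≤ κ := by
      by_contra hcon
      push_neg at hcon
      have hmem1 : κ ∈ Set.Ici sstar := hκgt.le
      have hmem2 : (2 * δ : ℝ) ∈ Set.Ici sstar := le_of_lt (hκgt.trans_le hcon.le)
      have := hgmono hmem1 hmem2 hcon.le
      linarith [hκeq, hk2, hδz]
    -- bound on |z| - κ
    have hmono : deriv Φ (α * κ) ≤ deriv Φ (α * (2 * δ)) :=
      aΦ' (Set.mem_Ioi.mpr (by positivity)) (Set.mem_Ioi.mpr (mul_pos hαpos (hspos.trans hκgt)))
        (mul_le_mul_of_nonneg_left h2δκ hαpos.le)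
    have hbound : |z| - κ < δ := by
      have heq : |z| - κ = η * α / Φ α * deriv Φ (α * κ) := by linarith [hκeq]
      have : η * α / Φ α * deriv Φ (α * κ) ≤ η * α / Φ α * deriv Φ (α * (2 * δ)) :=
        mul_le_mul_of_nonneg_left hmono hCpos.le
      linarith [hk2]
    rw [hSval, Real.dist_eq]
    have hsz : Real.sign z * |z| = z := by
      rcases hz.lt_or_gt with h | h
      · rw [Real.sign_of_neg h, abs_of_neg h]; ring
      · rw [Real.sign_of_pos h, abs_of_pos h]; ring
    have habs1 : |Real.sign z| = 1 := by
      rcases hz.lt_or_gt with h | h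
      · rw [Real.sign_of_neg h]; norm_num
      · rw [Real.sign_of_pos h]; norm_num
    have hfac : Real.sign z * κ - z = Real.sign z * (κ - |z|) := by
      rw [mul_sub, hsz]
    rw [hfac, abs_mul, habs1, one_mul, abs_sub_comm,
      abs_of_pos (show (0:ℝ) < |z| - κ by linarith)]
    linarith
end

section
/- For every s ≥ 0, the infimum over w > 0 of w·s + (w − 1)²/2 equals s − s²/2 if s < 1, and equals 1/2 if s ≥ 1. In other words, the concave conjugate of the χ²-divergence generator φ₂(w) = (w − 1)²/2 is the MCP function M(s). -/
/-!
Completing the square, `w * s + (w - 1)^2 / 2 = (w - (1 - s))^2 / 2 + (s - s^2 / 2)`, so for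
`s < 1` the infimum is a minimum attained at `w = 1 - s > 0`. For `s ≥ 1` the objective is
`1/2 + w * (s - 1 + w / 2) ≥ 1/2` on `w > 0`, and it tends to its value `1/2` at `w = 0`.
-/

open Set

theorem csInf_image_Ioi_eq_of_continuousWithinAt {α β : Type*} [LinearOrder α]
    [TopologicalSpace α] [OrderTopology α] [DenselyOrdered α] [NoMaxOrder α]
    [ConditionallyCompleteLinearOrder β] [TopologicalSpace β] [ClosedIciTopology β]
    {f : α → β} {a : α} (hf : ContinuousWithinAt f (Ioi a) a)
    (hle : ∀ x ∈ Ioi a, f a ≤ f x) :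
    sInf (f '' Ioi a) = f a := by
  have hbdd : BddBelow (f '' Ioi a) := ⟨f a, forall_mem_image.2 hle⟩
  refine le_antisymm ?_ (le_csInf (nonempty_Ioi.image f) (forall_mem_image.2 hle))
  exact ge_of_tendsto hf <| eventually_nhdsWithin_of_forall fun x hx =>
    csInf_le hbdd (mem_image_of_mem f hx)

theorem mul_add_sq_sub_one_div_two_eq (w s : ℝ) :
    w * s + (w - 1) ^ 2 / 2 = (w - (1 - s)) ^ 2 / 2 + (s - s ^ 2 / 2) := by
  ring

theorem isLeast_image_Ioi_mul_add_sq_sub_one_div_two {s : ℝ} (hs : s < 1) :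
    IsLeast ((fun w : ℝ => w * s + (w - 1) ^ 2 / 2) '' Ioi 0) (s - s ^ 2 / 2) := by
  refine ⟨⟨1 - s, sub_pos.2 hs, by ring⟩, forall_mem_image.2 fun w _ => ?_⟩
  rw [mul_add_sq_sub_one_div_two_eq]
  have := sq_nonneg (w - (1 - s))
  linarith

theorem stmt_15 :
    ∀ s : ℝ, 0 ≤ s →
      sInf ((fun w : ℝ => w * s + (w - 1)^2 / 2) '' Set.Ioi 0) =
        if s < 1 then s - s^2 / 2 else 1/2 := by
  intro s _
  split_ifs with hs
  · exact (isLeast_image_Ioi_mul_add_sq_sub_one_div_two hs).csInf_eq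
  · have hs : 1 ≤ s := not_lt.1 hs
    have hmin : ∀ w ∈ Ioi (0 : ℝ), 0 * s + (0 - 1) ^ 2 / 2 ≤ w * s + (w - 1) ^ 2 / 2 :=
      fun w hw => by nlinarith [mem_Ioi.1 hw]
    rw [csInf_image_Ioi_eq_of_continuousWithinAt (by fun_prop) hmin]
    norm_num
end

section
/- Let Φ be a nonzero Bernstein function on (0,∞) with Φ(0+) = 0 and lim_{s→∞} Φ(s)/s = 0. Then for every integer k ≥ 1: (i) lim_{s→∞} Φ^{(k)}(s) = 0; (ii) lim_{s→0+} s^k Φ^{(k)}(s) = 0; and (iii) if additionally lim_{s→∞} Φ(s) < ∞ (i.e., Φ is bounded), then lim_{s→∞} s^k Φ^{(k)}(s) = 0. -/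
open Set Filter Topology

theorem stmt_16 (Φ : ℝ → ℝ) (hB : IsBernstein Φ)
    (hnz : ∃ s, 0 < s ∧ 0 < Φ s)
    (h0 : Filter.Tendsto Φ (𝓝[>] (0:ℝ)) (𝓝 0))
    (hlin : Filter.Tendsto (fun s => Φ s / s) Filter.atTop (𝓝 0)) :
    ∀ k : ℕ, 1 ≤ k →
      Filter.Tendsto (iteratedDeriv k Φ) Filter.atTop (𝓝 0) ∧
      Filter.Tendsto (fun s => s^k * iteratedDeriv k Φ s) (𝓝[>] (0:ℝ)) (𝓝 0) ∧
      ((∃ M : ℝ, Filter.Tendsto Φ Filter.atTop (𝓝 M)) →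
        Filter.Tendsto (fun s => s^k * iteratedDeriv k Φ s) Filter.atTop (𝓝 0)) := by
  obtain ⟨hsm, hpos, hsgn⟩ := hB
  -- differentiability of all iterated derivatives on (0,∞)
  have hdiff : ∀ (m : ℕ) {x : ℝ}, x ∈ Ioi (0:ℝ) → DifferentiableAt ℝ (iteratedDeriv m Φ) x := by
    intro m x hx
    have heq : Set.EqOn (iteratedDerivWithin m Φ (Ioi 0)) (iteratedDeriv m Φ) (Ioi 0) := by
      intro y hy
      rw [iteratedDerivWithin_eq_iteratedFDerivWithin, iteratedDeriv_eq_iteratedFDeriv,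
        iteratedFDerivWithin_of_isOpen m isOpen_Ioi hy]
    have h1 : DifferentiableWithinAt ℝ (iteratedDerivWithin m Φ (Ioi 0)) (Ioi 0) x :=
      (hsm.differentiableOn_iteratedDerivWithin
        (by exact_mod_cast ENat.coe_lt_top m) (uniqueDiffOn_Ioi 0)) x hx
    have h2 : DifferentiableAt ℝ (iteratedDerivWithin m Φ (Ioi 0)) x :=
      h1.differentiableAt (isOpen_Ioi.mem_nhds hx)
    have hev : iteratedDerivWithin m Φ (Ioi 0) =ᶠ[𝓝 x] iteratedDeriv m Φ :=
      Filter.eventuallyEq_of_mem (isOpen_Ioi.mem_nhds hx) heq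
    exact h2.congr_of_eventuallyEq hev.symm
  have hder : ∀ (m : ℕ) {x : ℝ}, x ∈ Ioi (0:ℝ) →
      HasDerivAt (iteratedDeriv m Φ) (iteratedDeriv (m+1) Φ x) x := by
    intro m x hx
    rw [iteratedDeriv_succ]
    exact (hdiff m hx).hasDerivAt
  set D : ℕ → ℝ → ℝ := fun n s => (-1:ℝ)^n * iteratedDeriv (n+1) Φ s with hD
  have hDpos : ∀ n : ℕ, ∀ s ∈ Ioi (0:ℝ), 0 ≤ D n s := by
    intro n s hs
    have := hsgn (n+1) (by omega) s hs
    simpa [hD] using this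
  have hDder : ∀ n : ℕ, ∀ x ∈ Ioi (0:ℝ), HasDerivAt (D n) (-(D (n+1) x)) x := by
    intro n x hx
    have h := (hder (n+1) hx).const_mul ((-1:ℝ)^n)
    refine h.congr_deriv ?_
    simp [hD, pow_succ]
  have hDanti : ∀ n : ℕ, AntitoneOn (D n) (Ioi 0) := by
    intro n
    apply antitoneOn_of_deriv_nonpos (convex_Ioi 0)
    · exact fun x hx => (hDder n x hx).continuousAt.continuousWithinAt
    · rw [interior_Ioi]
      exact fun x hx => ((hDder n x hx).differentiableAt).differentiableWithinAt
    · rw [interior_Ioi]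
      intro x hx
      rw [(hDder n x hx).deriv]
      exact neg_nonpos.mpr (hDpos (n+1) x hx)
  have hΦder : ∀ x ∈ Ioi (0:ℝ), HasDerivAt Φ (D 0 x) x := by
    intro x hx
    have := hder 0 hx
    rw [iteratedDeriv_zero] at this
    simpa [hD] using this
  have hmono : MonotoneOn Φ (Ioi 0) := by
    apply monotoneOn_of_deriv_nonneg (convex_Ioi 0)
    · exact fun x hx => (hΦder x hx).continuousAt.continuousWithinAt
    · rw [interior_Ioi]
      exact fun x hx => ((hΦder x hx).differentiableAt).differentiableWithinAt
    · rw [interior_Ioi]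
      intro x hx
      rw [(hΦder x hx).deriv]
      exact hDpos 0 x hx
  -- one MVT step
  have hstep : ∀ n : ℕ, ∀ s δ : ℝ, 0 < δ → δ < s → δ * D (n+1) s ≤ D n (s - δ) := by
    intro n s δ hδ hδs
    have hs0 : (0:ℝ) < s := hδ.trans hδs
    have hsd : (0:ℝ) < s - δ := by linarith
    obtain ⟨c, hc, hceq⟩ := exists_hasDerivAt_eq_slope (iteratedDeriv (n+1) Φ)
      (iteratedDeriv (n+2) Φ) (show s - δ < s by linarith)
      (fun x hx => (hdiff (n+1) (show x ∈ Ioi (0:ℝ) from lt_of_lt_of_le hsd hx.1)).continuousAt.continuousWithinAt)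
      (fun x hx => hder (n+1) (show x ∈ Ioi (0:ℝ) from hsd.trans hx.1))
    have hc0 : c ∈ Ioi (0:ℝ) := hsd.trans hc.1
    have h1 : D (n+1) s ≤ D (n+1) c := hDanti (n+1) hc0 (mem_Ioi.mpr hs0) hc.2.le
    have hsub : s - (s - δ) = δ := by ring
    have hceq2 : iteratedDeriv (n+2) Φ c * δ =
        iteratedDeriv (n+1) Φ s - iteratedDeriv (n+1) Φ (s - δ) := by
      rw [hceq, hsub]; field_simp
    have hDn : 0 ≤ D n s := hDpos n s (mem_Ioi.mpr hs0)
    have h3 : (-1:ℝ)^(n+1) * iteratedDeriv (n+1) Φ s = -(D n s) := by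
      simp [hD, pow_succ]
    have h4 : (-1:ℝ)^(n+1) * iteratedDeriv (n+1) Φ (s - δ) = -(D n (s - δ)) := by
      simp [hD, pow_succ]
    have hDc : D (n+1) c = (-1:ℝ)^(n+1) * iteratedDeriv (n+2) Φ c := by
      simp only [hD]
    have h6 : δ * D (n+1) c = -(D n s) + D n (s - δ) := by
      rw [hDc]
      linear_combination ((-1:ℝ)^(n+1)) * hceq2 + h3 - h4
    have h7 : δ * D (n+1) s ≤ δ * D (n+1) c := mul_le_mul_of_nonneg_left h1 hδ.le
    linarith
  have hbase : ∀ s δ : ℝ, 0 < δ → δ < s → δ * D 0 s ≤ Φ s - Φ (s - δ) := by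
    intro s δ hδ hδs
    have hs0 : (0:ℝ) < s := hδ.trans hδs
    have hsd : (0:ℝ) < s - δ := by linarith
    obtain ⟨c, hc, hceq⟩ := exists_hasDerivAt_eq_slope Φ (D 0)
      (show s - δ < s by linarith)
      (fun x hx => (hΦder x (lt_of_lt_of_le hsd hx.1)).continuousAt.continuousWithinAt)
      (fun x hx => hΦder x (hsd.trans hx.1))
    have hc0 : c ∈ Ioi (0:ℝ) := hsd.trans hc.1
    have h1 : D 0 s ≤ D 0 c := hDanti 0 hc0 (mem_Ioi.mpr hs0) hc.2.le
    have hsub : s - (s - δ) = δ := by ring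
    rw [hceq, hsub, le_div_iff₀ hδ] at h1
    linarith
  -- key inequality by induction
  have key : ∀ n : ℕ, ∀ s δ : ℝ, 0 < δ → ((n:ℝ)+1) * δ < s →
      δ^(n+1) * D n s ≤ Φ (s - (n:ℝ)*δ) - Φ (s - ((n:ℝ)+1)*δ) := by
    intro n
    induction n with
    | zero =>
      intro s δ hδ hδs
      push_cast at hδs ⊢
      simpa [one_mul] using hbase s δ hδ (by linarith)
    | succ n ih =>
      intro s δ hδ hδs
      push_cast at hδs ⊢
      have hδs' : δ < s := by nlinarith [Nat.cast_nonneg (α := ℝ) n]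
      have h1 : δ * D (n+1) s ≤ D n (s - δ) := hstep n s δ hδ hδs'
      have h2 : δ^(n+1) * D n (s - δ) ≤ Φ (s - δ - (n:ℝ)*δ) - Φ (s - δ - ((n:ℝ)+1)*δ) := by
        apply ih (s - δ) δ hδ
        nlinarith
      have hδp : (0:ℝ) ≤ δ^(n+1) := by positivity
      have h3 : δ^(n+1+1) * D (n+1) s ≤ δ^(n+1) * D n (s - δ) := by
        calc δ^(n+1+1) * D (n+1) s = δ^(n+1) * (δ * D (n+1) s) := by ring
        _ ≤ δ^(n+1) * D n (s - δ) := by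
            exact mul_le_mul_of_nonneg_left h1 hδp
      calc δ^(n+1+1) * D (n+1) s ≤ Φ (s - δ - (n:ℝ)*δ) - Φ (s - δ - ((n:ℝ)+1)*δ) :=
            h3.trans h2
      _ = Φ (s - ((n:ℝ)+1)*δ) - Φ (s - ((n:ℝ)+1+1)*δ) := by ring_nf
  -- main bound: s^(n+1) D n s ≤ C (Φ s - Φ (s/2))
  have main : ∀ n : ℕ, ∀ s : ℝ, 0 < s →
      s^(n+1) * D n s ≤ (2*((n:ℝ)+1))^(n+1) * (Φ s - Φ (s/2)) := by
    intro n s hs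
    set δ : ℝ := s / (2*((n:ℝ)+1)) with hδdef
    have hn1 : (0:ℝ) < (n:ℝ)+1 := by positivity
    have hδ : 0 < δ := by positivity
    have hsum : ((n:ℝ)+1) * δ = s/2 := by
      rw [hδdef]; field_simp
    have hδs : ((n:ℝ)+1) * δ < s := by rw [hsum]; linarith
    have hk := key n s δ hδ hδs
    have hhalf : s - ((n:ℝ)+1)*δ = s/2 := by rw [hsum]; ring
    have hmem1 : s - (n:ℝ)*δ ∈ Ioi (0:ℝ) := by
      simp only [mem_Ioi]
      nlinarith [Nat.cast_nonneg (α := ℝ) n]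
    have hmem2 : s ∈ Ioi (0:ℝ) := mem_Ioi.mpr hs
    have hle : Φ (s - (n:ℝ)*δ) ≤ Φ s := hmono hmem1 hmem2 (by nlinarith [Nat.cast_nonneg (α := ℝ) n])
    have hk2 : δ^(n+1) * D n s ≤ Φ s - Φ (s/2) := by
      rw [hhalf] at hk; linarith
    have hseq : s = (2*((n:ℝ)+1)) * δ := by rw [hδdef]; field_simp
    have hCpos : (0:ℝ) < (2*((n:ℝ)+1))^(n+1) := by positivity
    calc s^(n+1) * D n s = (2*((n:ℝ)+1))^(n+1) * (δ^(n+1) * D n s) := by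
          rw [hseq, mul_pow]; ring
    _ ≤ (2*((n:ℝ)+1))^(n+1) * (Φ s - Φ (s/2)) :=
          mul_le_mul_of_nonneg_left hk2 hCpos.le
  -- the final statements
  intro k hk
  obtain ⟨n, rfl⟩ : ∃ n : ℕ, k = n + 1 := ⟨k - 1, by omega⟩
  set C : ℝ := (2*((n:ℝ)+1))^(n+1) with hCdef
  have hCpos : (0:ℝ) < C := by positivity
  have habs : ∀ s ∈ Ioi (0:ℝ), |iteratedDeriv (n+1) Φ s| = D n s := by
    intro s hs
    have h1 := hDpos n s hs
    have h2 : |D n s| = D n s := abs_of_nonneg h1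
    have h3 : |D n s| = |iteratedDeriv (n+1) Φ s| := by
      rw [hD]; rw [abs_mul, abs_pow, abs_neg, abs_one, one_pow, one_mul]
    rw [← h2, h3]
  have hboundΦ : ∀ s ∈ Ioi (0:ℝ), s^(n+1) * D n s ≤ C * Φ s := by
    intro s hs
    have h1 := main n s hs
    have h2 : 0 ≤ Φ (s/2) := hpos (s/2) (by simp only [mem_Ioi] at hs ⊢; linarith)
    calc s^(n+1) * D n s ≤ C * (Φ s - Φ (s/2)) := h1
    _ ≤ C * Φ s := by nlinarith
  refine ⟨?_, ?_, ?_⟩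
  · -- (i)
    apply squeeze_zero_norm' (a := fun s => C * (Φ s / s))
    · filter_upwards [eventually_ge_atTop (1:ℝ)] with s hs1
      have hs0 : (0:ℝ) < s := lt_of_lt_of_le one_pos hs1
      have hsmem : s ∈ Ioi (0:ℝ) := mem_Ioi.mpr hs0
      have hsp : s ≤ s^(n+1) := by
        calc s = s^1 := (pow_one s).symm
        _ ≤ s^(n+1) := pow_le_pow_right₀ hs1 (by omega)
      have hDn := hDpos n s hsmem
      have h1 : s * D n s ≤ s^(n+1) * D n s := mul_le_mul_of_nonneg_right hsp hDn
      have h2 : s * D n s ≤ C * Φ s := h1.trans (hboundΦ s hsmem)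
      rw [Real.norm_eq_abs, habs s hsmem]
      rw [show C * (Φ s / s) = (C * Φ s) / s by ring, le_div_iff₀ hs0]
      linarith
    · have := hlin.const_mul C
      simpa using this
  · -- (ii)
    apply squeeze_zero_norm' (a := fun s => C * Φ s)
    · filter_upwards [self_mem_nhdsWithin] with s hs
      have hs0 : (0:ℝ) < s := hs
      rw [Real.norm_eq_abs, abs_mul, abs_pow, abs_of_pos hs0, habs s hs]
      exact hboundΦ s hs
    · have := h0.const_mul C
      simpa using this
  · -- (iii)
    rintro ⟨M, hM⟩
    apply squeeze_zero_norm' (a := fun s => C * (Φ s - Φ (s/2)))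
    · filter_upwards [eventually_gt_atTop (0:ℝ)] with s hs0
      have hsmem : s ∈ Ioi (0:ℝ) := mem_Ioi.mpr hs0
      rw [Real.norm_eq_abs, abs_mul, abs_pow, abs_of_pos hs0, habs s hsmem]
      exact main n s hs0
    · have hhalf : Tendsto (fun s : ℝ => Φ (s/2)) atTop (𝓝 M) := by
        apply hM.comp
        exact tendsto_id.atTop_div_const (by norm_num)
      have := (hM.sub hhalf).const_mul C
      simpa using this
end
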